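/- arXiv:2602.14497 — 8 statements merged into one kernel-verified Lean document; each statement's English description precedes it below -/
import Mathlib

section
/- Let T ∈ ℕ, β ≥ 0, and let P̃_{β,T} be the probability measure on {−1,1}^T with P̃_{β,T}(φ) proportional to exp(β·Σ_{i=1}^{T−1} (φ_i + φ_{i+1})²) with respect to the uniform measure on {−1,1}^T. Then for every 1 ≤ j ≤ T−1, P̃_{β,T}(φ_j = φ_{j+1}) ≥ 1 − 4·e^{−4β}. -/
open Finset

/-- Spin configurations: functions from `Fin T` to `{−1, 1} ⊆ ℝ`. -/
abbrev Spins (T : ℕ) := Fin T → ({-1, 1} : Finset ℝ)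

/-- The value of the `k`-th spin (`0`-based); junk value `0` out of range. -/
noncomputable def spinVal {T : ℕ} (σ : Spins T) (k : ℕ) : ℝ :=
  if h : k < T then (σ ⟨k, h⟩ : ℝ) else 0

/-- The nearest-neighbour interaction `∑_{i=1}^{T−1} (φ_i + φ_{i+1})²`
(with `0`-based indexing of the spins). -/
noncomputable def nnEnergy (T : ℕ) (σ : Spins T) : ℝ :=
  ∑ i ∈ Finset.range (T - 1), (spinVal σ i + spinVal σ (i + 1)) ^ 2

/-- Flip all spins with index `≥ j`. -/
noncomputable def flipFrom (T j : ℕ) (σ : Spins T) : Spins T := fun i =>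
  if j ≤ i.1 then ⟨-(σ i : ℝ), by
    have h := (σ i).2
    simp only [Finset.mem_insert, Finset.mem_singleton] at h ⊢
    rcases h with h | h <;> rw [h] <;> norm_num⟩
  else σ i

lemma spinVal_mem {T : ℕ} (σ : Spins T) (k : ℕ) (hk : k < T) :
    spinVal σ k = -1 ∨ spinVal σ k = 1 := by
  have h := (σ ⟨k, hk⟩).2
  simp only [Finset.mem_insert, Finset.mem_singleton] at h
  simpa [spinVal, hk] using h

lemma spinVal_flipFrom {T j : ℕ} (σ : Spins T) (k : ℕ) (hk : k < T) :
    spinVal (flipFrom T j σ) k = if j ≤ k then -(spinVal σ k) else spinVal σ k := by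
  simp only [spinVal, hk, dif_pos, flipFrom]
  by_cases h : j ≤ k <;> simp [h]

lemma flipFrom_involutive (T j : ℕ) : Function.Involutive (flipFrom T j) := by
  intro σ
  funext i
  simp only [flipFrom]
  by_cases h : j ≤ i.1 <;> simp [h]

lemma nnEnergy_flipFrom (T j : ℕ) (hj : 1 ≤ j) (hjT : j ≤ T - 1) (σ : Spins T)
    (hne : spinVal σ (j - 1) ≠ spinVal σ j) :
    nnEnergy T (flipFrom T j σ) = nnEnergy T σ + 4 := by
  have hT : 2 ≤ T := by omega
  have key : ∀ i ∈ Finset.range (T - 1),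
      (spinVal (flipFrom T j σ) i + spinVal (flipFrom T j σ) (i + 1)) ^ 2 =
      (spinVal σ i + spinVal σ (i + 1)) ^ 2 + (if i = j - 1 then (4 : ℝ) else 0) := by
    intro i hi
    rw [Finset.mem_range] at hi
    have hiT : i < T := by omega
    have hi1T : i + 1 < T := by omega
    rw [spinVal_flipFrom σ i hiT, spinVal_flipFrom σ (i + 1) hi1T]
    by_cases hcase : i = j - 1
    · subst hcase
      have h1 : ¬ j ≤ j - 1 := by omega
      have h2 : j ≤ j - 1 + 1 := by omega
      have h3 : j - 1 + 1 = j := by omega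
      rw [if_pos rfl, if_neg h1, if_pos h2, h3] at *
      have ha := spinVal_mem σ (j - 1) (by omega)
      have hb := spinVal_mem σ j (by omega)
      rcases ha with ha | ha <;> rcases hb with hb | hb <;>
        rw [ha, hb] <;> first | (exfalso; rw [ha, hb] at hne; exact hne rfl) | norm_num
    · rw [if_neg hcase]
      by_cases h : j ≤ i
      · rw [if_pos h, if_pos (by omega : j ≤ i + 1)]
        ring
      · rw [if_neg h, if_neg (by omega : ¬ j ≤ i + 1)]
        ring
  unfold nnEnergy
  rw [Finset.sum_congr rfl key, Finset.sum_add_distrib, Finset.sum_ite_eq'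
    (Finset.range (T - 1)) (j - 1), if_pos (Finset.mem_range.mpr (by omega))]

/-- **Proposition.** For the Gibbs measure `P̃_{β,T}` on `{−1,1}^T` proportional to
`exp(β ∑_{i=1}^{T−1} (φ_i + φ_{i+1})²)` and any `1 ≤ j ≤ T−1`,
`P̃_{β,T}(φ_j = φ_{j+1}) ≥ 1 − 4 e^{−4β}`.  (Spins `φ_j`, `φ_{j+1}` in `1`-based
indexing correspond to `spinVal σ (j−1)`, `spinVal σ j`.) -/
theorem neighbour_spins_agree
    (T : ℕ) (β : ℝ) (hβ : 0 ≤ β) (j : ℕ) (hj : 1 ≤ j) (hjT : j ≤ T - 1) :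
    1 - 4 * Real.exp (-(4 * β)) ≤
      (∑ σ : Spins T,
          if spinVal σ (j - 1) = spinVal σ j then Real.exp (β * nnEnergy T σ) else 0) /
        (∑ σ : Spins T, Real.exp (β * nnEnergy T σ)) := by
  have hT : 2 ≤ T := by omega
  classical
  set f : Spins T → ℝ := fun σ => Real.exp (β * nnEnergy T σ) with hf
  set A : ℝ := ∑ σ : Spins T, if spinVal σ (j - 1) = spinVal σ j then f σ else 0 with hA
  set B : ℝ := ∑ σ : Spins T, if spinVal σ (j - 1) = spinVal σ j then 0 else f σ with hB
  set Z : ℝ := ∑ σ : Spins T, f σ with hZ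
  have hne : Nonempty (Spins T) := ⟨fun _ => ⟨1, by simp⟩⟩
  have hZpos : 0 < Z := Finset.sum_pos (fun σ _ => Real.exp_pos _) Finset.univ_nonempty
  have hBnn : 0 ≤ B := Finset.sum_nonneg fun σ _ => by
    split <;> [exact le_refl 0; exact (Real.exp_pos _).le]
  have hsplit : A + B = Z := by
    rw [hA, hB, hZ, ← Finset.sum_add_distrib]
    refine Finset.sum_congr rfl fun σ _ => ?_
    split <;> ring
  -- bound B
  set E : ℝ := Real.exp (-(4 * β)) with hE
  have hEpos : 0 < E := Real.exp_pos _
  have hBle : B ≤ E * Z := by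
    have hBeq : B = ∑ σ ∈ Finset.univ.filter
        (fun σ : Spins T => ¬ spinVal σ (j - 1) = spinVal σ j), f σ := by
      rw [hB, Finset.sum_filter]
      refine Finset.sum_congr rfl fun σ _ => ?_
      split <;> simp_all
    have hterm : ∀ σ ∈ Finset.univ.filter
        (fun σ : Spins T => ¬ spinVal σ (j - 1) = spinVal σ j),
        f σ = E * f (flipFrom T j σ) := by
      intro σ hσ
      rw [Finset.mem_filter] at hσ
      have := nnEnergy_flipFrom T j hj hjT σ hσ.2
      rw [hf]
      simp only []
      rw [this, ← Real.exp_add]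
      ring_nf
    rw [hBeq, Finset.sum_congr rfl hterm, ← Finset.mul_sum]
    refine mul_le_mul_of_nonneg_left ?_ hEpos.le
    have hinj : Set.InjOn (flipFrom T j) ↑(Finset.univ.filter
        (fun σ : Spins T => ¬ spinVal σ (j - 1) = spinVal σ j)) :=
      (flipFrom_involutive T j).injective.injOn
    calc ∑ σ ∈ Finset.univ.filter
          (fun σ : Spins T => ¬ spinVal σ (j - 1) = spinVal σ j), f (flipFrom T j σ)
        = ∑ τ ∈ (Finset.univ.filter
          (fun σ : Spins T => ¬ spinVal σ (j - 1) = spinVal σ j)).image (flipFrom T j), f τ :=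
          (Finset.sum_image (fun a ha b hb h => hinj ha hb h)).symm
      _ ≤ Z := Finset.sum_le_sum_of_subset_of_nonneg (Finset.subset_univ _)
          (fun τ _ _ => (Real.exp_pos _).le)
  rw [le_div_iff₀ hZpos]
  nlinarith [hBle, hsplit, hBnn, hEpos, hZpos]
end

section
/- There exists a constant C > 0 such that for every β ≥ 1 with e^{4β} ∈ ℕ, every T ∈ ℕ, and every index i ∈ ℕ with i + e^{4β} − 1 ≤ T, the measure P̃_{β,T} on {−1,1}^T satisfies P̃_{β,T}(φ_i = φ_{i+1} = ⋯ = φ_{i+e^{4β}−1}) ≥ C. -/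
open Finset

namespace BlockAlign

noncomputable def bSign (x : Bool) : ℝ := if x then 1 else -1

lemma bSign_mul_self (x : Bool) : bSign x * bSign x = 1 := by
  cases x <;> simp [bSign]

noncomputable def bv (s : ℝ) (b : ℕ → Bool) (k : ℕ) : ℝ :=
  s * ∏ j ∈ Finset.range k, bSign (b j)

lemma bv_zero (s : ℝ) (b : ℕ → Bool) : bv s b 0 = s := by simp [bv]

lemma bv_succ (s : ℝ) (b : ℕ → Bool) (k : ℕ) :
    bv s b (k + 1) = bv s b k * bSign (b k) := by
  simp [bv, Finset.prod_range_succ, mul_assoc]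

lemma bv_mem (s : ℝ) (hs : s = -1 ∨ s = 1) (b : ℕ → Bool) (k : ℕ) :
    bv s b k = -1 ∨ bv s b k = 1 := by
  induction k with
  | zero => simpa [bv_zero] using hs
  | succ n ih =>
    rw [bv_succ]
    rcases ih with h | h <;> cases hb : b n <;> simp [h, hb, bSign]

lemma bv_ne_zero (s : ℝ) (hs : s = -1 ∨ s = 1) (b : ℕ → Bool) (k : ℕ) :
    bv s b k ≠ 0 := by
  rcases bv_mem s hs b k with h | h <;> rw [h] <;> norm_num

/-- extend bond configuration by `true` out of range -/
def extB {n : ℕ} (b : Fin n → Bool) : ℕ → Bool :=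
  fun j => if h : j < n then b ⟨j, h⟩ else true

lemma extB_lt {n : ℕ} (b : Fin n → Bool) (j : ℕ) (h : j < n) :
    extB b j = b ⟨j, h⟩ := dif_pos h

lemma mem_pm (x : ℝ) : x ∈ ({-1, 1} : Finset ℝ) ↔ x = -1 ∨ x = 1 := by
  simp

/-- the spin configuration built from a first spin and bond variables -/
noncomputable def F (T : ℕ) (p : ({-1, 1} : Finset ℝ) × (Fin (T - 1) → Bool)) :
    Spins T :=
  fun k => ⟨bv (p.1 : ℝ) (extB p.2) k.val,
    (mem_pm _).mpr (bv_mem _ ((mem_pm _).mp p.1.2) _ _)⟩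

lemma spinVal_F (T : ℕ) (p : ({-1, 1} : Finset ℝ) × (Fin (T - 1) → Bool))
    (k : ℕ) (hk : k < T) : spinVal (F T p) k = bv (p.1 : ℝ) (extB p.2) k := by
  rw [spinVal, dif_pos hk]; rfl

lemma F_injective (T : ℕ) (hT : 1 ≤ T) : Function.Injective (F T) := by
  intro p q h
  have hval : ∀ k : ℕ, k < T → bv (p.1 : ℝ) (extB p.2) k = bv (q.1 : ℝ) (extB q.2) k := by
    intro k hk
    have := congrFun h ⟨k, hk⟩
    exact Subtype.ext_iff.mp this
  have h1 : p.1 = q.1 := Subtype.ext (by simpa [bv_zero] using hval 0 hT)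
  have h2 : p.2 = q.2 := by
    funext j
    have hj1 : (j : ℕ) + 1 < T := by omega
    have e1 := hval j (by omega)
    have e2 := hval ((j : ℕ) + 1) hj1
    rw [bv_succ, bv_succ, e1] at e2
    have hnz : bv (q.1 : ℝ) (extB q.2) (j : ℕ) ≠ 0 :=
      bv_ne_zero _ ((mem_pm _).mp q.1.2) _ _
    have hb : bSign (extB p.2 (j : ℕ)) = bSign (extB q.2 (j : ℕ)) :=
      mul_left_cancel₀ hnz e2
    have hext : extB p.2 (j : ℕ) = extB q.2 (j : ℕ) := by
      revert hb
      cases extB p.2 (j : ℕ) <;> cases extB q.2 (j : ℕ) <;> simp [bSign] <;> norm_num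
    rw [extB_lt p.2 _ j.isLt, extB_lt q.2 _ j.isLt] at hext
    simpa using hext
  exact Prod.ext h1 h2

lemma F_bijective (T : ℕ) (hT : 1 ≤ T) : Function.Bijective (F T) := by
  rw [Fintype.bijective_iff_injective_and_card]
  refine ⟨F_injective T hT, ?_⟩
  have hcardS : Fintype.card ({-1, 1} : Finset ℝ) = 2 := by
    rw [Fintype.card_coe]
    rw [Finset.card_insert_of_notMem (by norm_num), Finset.card_singleton]
  have h1 : Fintype.card (({-1, 1} : Finset ℝ) × (Fin (T - 1) → Bool)) = 2 ^ T := by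
    rw [Fintype.card_prod, Fintype.card_fun, hcardS]
    simp only [Fintype.card_bool, Fintype.card_fin]
    rw [← pow_succ']
    congr 1
    omega
  have h2 : Fintype.card (Spins T) = 2 ^ T := by
    rw [Fintype.card_fun, hcardS, Fintype.card_fin]
  rw [h1, h2]

lemma energy_F (T : ℕ) (p : ({-1, 1} : Finset ℝ) × (Fin (T - 1) → Bool)) :
    nnEnergy T (F T p) = ∑ j ∈ Finset.range (T - 1), (if extB p.2 j then (4 : ℝ) else 0) := by
  unfold nnEnergy
  apply Finset.sum_congr rfl
  intro j hj
  have hj' : j < T - 1 := Finset.mem_range.mp hj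
  have h1 : j < T := by omega
  have h2 : j + 1 < T := by omega
  rw [spinVal_F T p j h1, spinVal_F T p (j + 1) h2, bv_succ]
  rcases bv_mem (p.1 : ℝ) ((mem_pm _).mp p.1.2) (extB p.2) j with h | h <;>
    cases hb : extB p.2 j <;> simp only [h, hb] <;> norm_num [bSign]

end BlockAlign

/-- **Proposition.** There is a universal constant `C > 0` such that for every `β ≥ 1`
with `e^{4β} = m ∈ ℕ`, every `T` and every `1 ≤ i` with `i + e^{4β} − 1 ≤ T`, the Gibbs
measure `P̃_{β,T}` on `{−1,1}^T` proportional to `exp(β ∑_{i=1}^{T−1} (φ_i + φ_{i+1})²)`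
satisfies `P̃_{β,T}(φ_i = φ_{i+1} = ⋯ = φ_{i+e^{4β}−1}) ≥ C`.  (The event, in `1`-based
indexing, is that all the spins `φ_i, …, φ_{i+m−1}` coincide, i.e. `φ_k = φ_{k+1}` for
every `i ≤ k < i + m − 1`.) -/
theorem block_alignment_probability :
    ∃ C > (0 : ℝ), ∀ β : ℝ, 1 ≤ β → ∀ m : ℕ, (m : ℝ) = Real.exp (4 * β) →
      ∀ T i : ℕ, 1 ≤ i → i + m - 1 ≤ T →
        C ≤ (∑ σ : Spins T,
              if ∀ k ∈ Finset.Ico i (i + m - 1), spinVal σ (k - 1) = spinVal σ k then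
                Real.exp (β * nnEnergy T σ) else 0) /
            (∑ σ : Spins T, Real.exp (β * nnEnergy T σ)) := by
  refine ⟨Real.exp (-1), Real.exp_pos _, ?_⟩
  intro β hβ m hm T i hi hiT
  have hm5 : (5 : ℝ) ≤ (m : ℝ) := by
    rw [hm]
    have h4 : (4 : ℝ) + 1 ≤ Real.exp 4 := Real.add_one_le_exp 4
    have h4' : Real.exp 4 ≤ Real.exp (4 * β) := Real.exp_le_exp.mpr (by nlinarith)
    linarith
  have hm2 : 2 ≤ m := by exact_mod_cast (by linarith : (2 : ℝ) ≤ (m : ℝ))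
  have hT1 : 1 ≤ T := by omega
  have hmpos : (0 : ℝ) < (m : ℝ) := by linarith
  have hbij := BlockAlign.F_bijective T hT1
  have hsum : ∀ h : Spins T → ℝ, ∑ σ : Spins T, h σ =
      ∑ p : ({-1, 1} : Finset ℝ) × (Fin (T - 1) → Bool), h (BlockAlign.F T p) :=
    fun h => (Fintype.sum_bijective _ hbij _ h (fun p => rfl)).symm
  -- the weight of a configuration in bond variables
  have hweight : ∀ p : ({-1, 1} : Finset ℝ) × (Fin (T - 1) → Bool),
      Real.exp (β * nnEnergy T (BlockAlign.F T p)) =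
        ∏ j : Fin (T - 1), (if p.2 j then (m : ℝ) else 1) := by
    intro p
    rw [BlockAlign.energy_F, Finset.mul_sum, Real.exp_sum,
      ← Fin.prod_univ_eq_prod_range
        (fun j => Real.exp (β * if BlockAlign.extB p.2 j then (4 : ℝ) else 0)) (T - 1)]
    apply Finset.prod_congr rfl
    intro j _
    rw [BlockAlign.extB_lt p.2 _ j.isLt, Fin.eta]
    cases hq : p.2 j
    · simp
    · rw [if_pos rfl, if_pos rfl, hm, mul_comm]
  -- translation of the alignment event to bond variables
  have hevent : ∀ p : ({-1, 1} : Finset ℝ) × (Fin (T - 1) → Bool),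
      (∀ k ∈ Finset.Ico i (i + m - 1),
          spinVal (BlockAlign.F T p) (k - 1) = spinVal (BlockAlign.F T p) k)
      ↔ (∀ j : Fin (T - 1), (j : ℕ) + 1 ∈ Finset.Ico i (i + m - 1) → p.2 j = true) := by
    intro p
    have hnz : ∀ k, BlockAlign.bv (p.1 : ℝ) (BlockAlign.extB p.2) k ≠ 0 :=
      fun k => BlockAlign.bv_ne_zero _ ((BlockAlign.mem_pm _).mp p.1.2) _ _
    constructor
    · intro h j hj
      rw [Finset.mem_Ico] at hj
      have hk : (j : ℕ) + 1 < T := by omega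
      have hthis := h ((j : ℕ) + 1) (Finset.mem_Ico.mpr hj)
      rw [Nat.add_sub_cancel, BlockAlign.spinVal_F T p _ (by omega),
        BlockAlign.spinVal_F T p _ hk, BlockAlign.bv_succ] at hthis
      have h1 : BlockAlign.bv (p.1 : ℝ) (BlockAlign.extB p.2) (j : ℕ) * 1 =
          BlockAlign.bv (p.1 : ℝ) (BlockAlign.extB p.2) (j : ℕ) *
            BlockAlign.bSign (BlockAlign.extB p.2 (j : ℕ)) := by
        rw [mul_one]; exact hthis
      have hb1 : (1 : ℝ) = BlockAlign.bSign (BlockAlign.extB p.2 (j : ℕ)) :=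
        mul_left_cancel₀ (hnz _) h1
      rw [BlockAlign.extB_lt p.2 _ j.isLt, Fin.eta] at hb1
      cases hq : p.2 j
      · exfalso; rw [hq] at hb1; norm_num [BlockAlign.bSign] at hb1
      · rfl
    · intro h k hk
      rw [Finset.mem_Ico] at hk
      have hk1 : 1 ≤ k := le_trans hi hk.1
      have hkT : k < T := by omega
      have hj : k - 1 < T - 1 := by omega
      have hb : p.2 ⟨k - 1, hj⟩ = true := by
        apply h ⟨k - 1, hj⟩
        rw [Finset.mem_Ico]
        constructor <;> simp <;> omega
      rw [BlockAlign.spinVal_F T p _ (by omega), BlockAlign.spinVal_F T p _ hkT]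
      have hs := BlockAlign.bv_succ (p.1 : ℝ) (BlockAlign.extB p.2) (k - 1)
      have hk2 : k - 1 + 1 = k := by omega
      rw [hk2] at hs
      rw [hs, BlockAlign.extB_lt p.2 _ hj, hb]
      simp [BlockAlign.bSign]
  -- the numerator summand as a product over bonds
  have hNsummand : ∀ p : ({-1, 1} : Finset ℝ) × (Fin (T - 1) → Bool),
      (if ∀ k ∈ Finset.Ico i (i + m - 1),
          spinVal (BlockAlign.F T p) (k - 1) = spinVal (BlockAlign.F T p) k then
        Real.exp (β * nnEnergy T (BlockAlign.F T p)) else 0)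
      = ∏ j : Fin (T - 1),
          (if (j : ℕ) + 1 ∈ Finset.Ico i (i + m - 1) then (if p.2 j then (m : ℝ) else 0)
           else (if p.2 j then (m : ℝ) else 1)) := by
    intro p
    rw [hweight p, if_congr (hevent p) rfl rfl]
    by_cases hall : ∀ j : Fin (T - 1), (j : ℕ) + 1 ∈ Finset.Ico i (i + m - 1) → p.2 j = true
    · rw [if_pos hall]
      apply Finset.prod_congr rfl
      intro j _
      by_cases hQ : (j : ℕ) + 1 ∈ Finset.Ico i (i + m - 1)
      · rw [if_pos hQ, hall j hQ]
        norm_num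
      · rw [if_neg hQ]
    · rw [if_neg hall]
      push_neg at hall
      obtain ⟨j, hQ, hfalse⟩ := hall
      symm
      apply Finset.prod_eq_zero (Finset.mem_univ j)
      have hf2 : p.2 j = false := by simpa using hfalse
      rw [if_pos hQ, hf2]
      norm_num
  -- factorization of sums over bond configurations
  have hfactor : ∀ g : Fin (T - 1) → Bool → ℝ,
      ∑ b : Fin (T - 1) → Bool, ∏ j, g j (b j) = ∏ j, (g j true + g j false) := by
    intro g
    rw [← Fintype.piFinset_univ, ← Finset.prod_univ_sum]
    apply Finset.prod_congr rfl
    intro j _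
    rw [Fintype.sum_bool]
  have hcard2 : (Finset.univ : Finset ({-1, 1} : Finset ℝ)).card = 2 := by
    rw [Finset.card_univ, Fintype.card_coe,
      Finset.card_insert_of_notMem (by norm_num), Finset.card_singleton]
  -- the denominator
  have hDen : (∑ σ : Spins T, Real.exp (β * nnEnergy T σ)) = 2 * ((m : ℝ) + 1) ^ (T - 1) := by
    rw [hsum (fun σ => Real.exp (β * nnEnergy T σ))]
    calc (∑ p : ({-1, 1} : Finset ℝ) × (Fin (T - 1) → Bool),
            Real.exp (β * nnEnergy T (BlockAlign.F T p)))
        = ∑ p : ({-1, 1} : Finset ℝ) × (Fin (T - 1) → Bool),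
            ∏ j : Fin (T - 1), (if p.2 j then (m : ℝ) else 1) :=
          Finset.sum_congr rfl (fun p _ => hweight p)
      _ = ∑ _s : ({-1, 1} : Finset ℝ), ∑ b : Fin (T - 1) → Bool,
            ∏ j : Fin (T - 1), (if b j then (m : ℝ) else 1) := by rw [Fintype.sum_prod_type]
      _ = ∑ _s : ({-1, 1} : Finset ℝ), ((m : ℝ) + 1) ^ (T - 1) := by
          apply Finset.sum_congr rfl
          intro s _
          rw [hfactor (fun j x => if x then (m : ℝ) else 1)]
          simp [Finset.prod_const]
      _ = 2 * ((m : ℝ) + 1) ^ (T - 1) := by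
          rw [Finset.sum_const, hcard2, nsmul_eq_mul]
          norm_num
  -- the numerator
  have hNum : (∑ σ : Spins T,
        if ∀ k ∈ Finset.Ico i (i + m - 1), spinVal σ (k - 1) = spinVal σ k then
          Real.exp (β * nnEnergy T σ) else 0)
      = 2 * ∏ j : Fin (T - 1),
          (if (j : ℕ) + 1 ∈ Finset.Ico i (i + m - 1) then (m : ℝ) else (m : ℝ) + 1) := by
    rw [hsum (fun σ => if ∀ k ∈ Finset.Ico i (i + m - 1),
        spinVal σ (k - 1) = spinVal σ k then Real.exp (β * nnEnergy T σ) else 0)]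
    calc (∑ p : ({-1, 1} : Finset ℝ) × (Fin (T - 1) → Bool),
            if ∀ k ∈ Finset.Ico i (i + m - 1),
                spinVal (BlockAlign.F T p) (k - 1) = spinVal (BlockAlign.F T p) k then
              Real.exp (β * nnEnergy T (BlockAlign.F T p)) else 0)
        = ∑ p : ({-1, 1} : Finset ℝ) × (Fin (T - 1) → Bool),
            ∏ j : Fin (T - 1),
              (if (j : ℕ) + 1 ∈ Finset.Ico i (i + m - 1) then (if p.2 j then (m : ℝ) else 0)
               else (if p.2 j then (m : ℝ) else 1)) :=
          Finset.sum_congr rfl (fun p _ => hNsummand p)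
      _ = ∑ _s : ({-1, 1} : Finset ℝ), ∑ b : Fin (T - 1) → Bool,
            ∏ j : Fin (T - 1),
              (if (j : ℕ) + 1 ∈ Finset.Ico i (i + m - 1) then (if b j then (m : ℝ) else 0)
               else (if b j then (m : ℝ) else 1)) := by rw [Fintype.sum_prod_type]
      _ = ∑ _s : ({-1, 1} : Finset ℝ), ∏ j : Fin (T - 1),
            (if (j : ℕ) + 1 ∈ Finset.Ico i (i + m - 1) then (m : ℝ) else (m : ℝ) + 1) := by
          apply Finset.sum_congr rfl
          intro s _
          rw [hfactor (fun j x => if (j : ℕ) + 1 ∈ Finset.Ico i (i + m - 1)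
            then (if x then (m : ℝ) else 0) else (if x then (m : ℝ) else 1))]
          apply Finset.prod_congr rfl
          intro j _
          by_cases hQ : (j : ℕ) + 1 ∈ Finset.Ico i (i + m - 1) <;> simp [hQ]
      _ = 2 * ∏ j : Fin (T - 1),
            (if (j : ℕ) + 1 ∈ Finset.Ico i (i + m - 1) then (m : ℝ) else (m : ℝ) + 1) := by
          rw [Finset.sum_const, hcard2, nsmul_eq_mul]
          norm_num
  -- counting the constrained bonds
  set K := (Finset.univ.filter
      (fun j : Fin (T - 1) => (j : ℕ) + 1 ∈ Finset.Ico i (i + m - 1))).card with hKdef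
  have hprod : (∏ j : Fin (T - 1),
        (if (j : ℕ) + 1 ∈ Finset.Ico i (i + m - 1) then (m : ℝ) else (m : ℝ) + 1))
      = (m : ℝ) ^ K * ((m : ℝ) + 1) ^ (T - 1 - K) := by
    have hadd := Finset.card_filter_add_card_filter_not
      (s := (Finset.univ : Finset (Fin (T - 1))))
      (p := fun j : Fin (T - 1) => (j : ℕ) + 1 ∈ Finset.Ico i (i + m - 1))
    rw [Finset.card_univ, Fintype.card_fin] at hadd
    rw [Finset.prod_ite, Finset.prod_const, Finset.prod_const]
    congr 1
    congr 1
    omega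
  have hKn : K ≤ T - 1 := by
    rw [hKdef]
    calc (Finset.univ.filter _).card ≤ (Finset.univ : Finset (Fin (T - 1))).card :=
          Finset.card_filter_le _ _
      _ = T - 1 := by rw [Finset.card_univ, Fintype.card_fin]
  have hK : K ≤ m := by
    have hle : K ≤ (Finset.Ico i (i + m - 1)).card := by
      rw [hKdef]
      refine Finset.card_le_card_of_injOn (fun j => (j : ℕ) + 1) ?_ ?_
      · intro j hj
        exact (Finset.mem_filter.mp hj).2
      · intro a _ b _ h
        have h' : (a : ℕ) + 1 = (b : ℕ) + 1 := h
        exact Fin.ext (by omega)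
    rw [Nat.card_Ico] at hle
    omega
  -- the key analytic inequality
  have hkey : Real.exp (-1) * ((m : ℝ) + 1) ^ K ≤ (m : ℝ) ^ K := by
    have h1 : ((m : ℝ) + 1) / (m : ℝ) ≤ Real.exp (1 / (m : ℝ)) := by
      have heq : ((m : ℝ) + 1) / (m : ℝ) = 1 / (m : ℝ) + 1 := by field_simp; ring
      rw [heq]
      exact Real.add_one_le_exp _
    have hbase1 : (1 : ℝ) ≤ ((m : ℝ) + 1) / (m : ℝ) := by
      rw [le_div_iff₀ hmpos]; linarith
    have h2 : (((m : ℝ) + 1) / (m : ℝ)) ^ K ≤ (((m : ℝ) + 1) / (m : ℝ)) ^ m :=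
      pow_le_pow_right₀ hbase1 hK
    have h3 : (((m : ℝ) + 1) / (m : ℝ)) ^ m ≤ (Real.exp (1 / (m : ℝ))) ^ m :=
      pow_le_pow_left₀ (by positivity) h1 m
    have h4 : (Real.exp (1 / (m : ℝ))) ^ m = Real.exp 1 := by
      rw [← Real.exp_nat_mul]
      congr 1
      field_simp
    have h6 : ((m : ℝ) + 1) ^ K / (m : ℝ) ^ K ≤ Real.exp 1 := by
      rw [← div_pow]
      calc (((m : ℝ) + 1) / (m : ℝ)) ^ K ≤ (((m : ℝ) + 1) / (m : ℝ)) ^ m := h2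
        _ ≤ (Real.exp (1 / (m : ℝ))) ^ m := h3
        _ = Real.exp 1 := h4
    rw [div_le_iff₀ (by positivity)] at h6
    calc Real.exp (-1) * ((m : ℝ) + 1) ^ K
        ≤ Real.exp (-1) * (Real.exp 1 * (m : ℝ) ^ K) :=
          mul_le_mul_of_nonneg_left h6 (Real.exp_pos _).le
      _ = (m : ℝ) ^ K := by rw [← mul_assoc, ← Real.exp_add]; norm_num
  -- conclusion
  rw [hNum, hDen, hprod]
  have hD : (0 : ℝ) < 2 * ((m : ℝ) + 1) ^ (T - 1) := by positivity
  rw [le_div_iff₀ hD]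
  have hsplit : ((m : ℝ) + 1) ^ (T - 1) = ((m : ℝ) + 1) ^ K * ((m : ℝ) + 1) ^ (T - 1 - K) := by
    rw [← pow_add]
    congr 1
    omega
  calc Real.exp (-1) * (2 * ((m : ℝ) + 1) ^ (T - 1))
      = 2 * ((Real.exp (-1) * ((m : ℝ) + 1) ^ K) * ((m : ℝ) + 1) ^ (T - 1 - K)) := by
        rw [hsplit]; ring
    _ ≤ 2 * ((m : ℝ) ^ K * ((m : ℝ) + 1) ^ (T - 1 - K)) := by
        apply mul_le_mul_of_nonneg_left _ (by norm_num)
        exact mul_le_mul_of_nonneg_right hkey (by positivity)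
end

section
/- Let θ be a symmetric probability measure on ℝ supported on a finite set, with variance V = ∫ x² θ(dx) > 0, and let β > 0 satisfy βV ≤ 2. Define the tilted product measure P_{β} on ℝ² by P_β(dy dz) proportional to exp(β·y·z)·θ(dy)·θ(dz). Then E^{P_β}[y·z] ≥ V·tanh(βV). -/
/-!
Put `W = yz` under `θ ⊗ θ` and `s = βV`. The law of `W` is symmetric with `E[W²] = V²`, so
`E[W e^{βW}] = E[W sinh βW]`, `E[e^{βW}] = E[cosh βW]`, and the claim reads
`β cosh s · E[W sinh βW] ≥ s sinh s · E[cosh βW]`. This is the mean of the pointwise bound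
`2s (t sinh t cosh s - s sinh s cosh t) ≥ (sinh s cosh s + s)(t² - s²)` at `t = βW`, whose right
side has mean zero. The left side minus the right side is even in `t` and vanishes at `t = s`;
half its derivative vanishes at `0` and `s` and is convex on `[0, ∞)` as soon as
`s sinh s ≤ 4 cosh s` (true for `s ≤ 2`), so it is `≤ 0` on `[0, s]` and `≥ 0` beyond, making
`t = s` a minimum.
-/

open MeasureTheory Real Set

lemma Real.sinh_le_mul_cosh {x : ℝ} (hx : 0 ≤ x) : sinh x ≤ x * cosh x := by
  have h := (convex_Icc 0 x).image_sub_le_mul_sub_of_deriv_le continuous_sinh.continuousOn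
    differentiable_sinh.differentiableOn (C := cosh x) (fun y hy => ?_)
    0 (left_mem_Icc.2 hx) x (right_mem_Icc.2 hx) hx
  · simpa [mul_comm] using h
  · rw [interior_Icc] at hy
    rw [deriv_sinh, cosh_le_cosh, abs_of_pos hy.1, abs_of_nonneg hx]
    exact hy.2.le

/-- Half the `t`-derivative of the gap in `Real.sinh_cosh_tangent_ineq`. -/
lemma Real.convexOn_Ici_sinhCoshGap_deriv {s : ℝ} (hs : 0 ≤ s) (hs4 : s * sinh s ≤ 4 * cosh s) :
    ConvexOn ℝ (Ici 0) fun t =>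
      s * ((sinh t + t * cosh t) * cosh s - s * sinh s * sinh t) - (sinh s * cosh s + s) * t := by
  refine convexOn_of_hasDerivWithinAt2_nonneg (convex_Ici 0) (by fun_prop)
    (f' := fun t => s * ((2 * cosh t + t * sinh t) * cosh s - s * sinh s * cosh t)
      - (sinh s * cosh s + s))
    (f'' := fun t => s * ((3 * sinh t + t * cosh t) * cosh s - s * sinh s * sinh t))
    (fun t _ => HasDerivAt.hasDerivWithinAt ?_) (fun t _ => HasDerivAt.hasDerivWithinAt ?_)
    (fun t ht => ?_)
  · have h := (hasDerivAt_sinh t).add ((hasDerivAt_id' t).mul (hasDerivAt_cosh t))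
    refine ((((h.mul_const (cosh s)).sub ((hasDerivAt_sinh t).const_mul (s * sinh s))).const_mul
      s).sub ((hasDerivAt_id' t).const_mul _)).congr_deriv ?_
    ring
  · have h := ((hasDerivAt_cosh t).const_mul 2).add ((hasDerivAt_id' t).mul (hasDerivAt_sinh t))
    refine ((((h.mul_const (cosh s)).sub ((hasDerivAt_cosh t).const_mul (s * sinh s))).const_mul
      s).sub_const _).congr_deriv ?_
    ring
  · rw [interior_Ici] at ht
    have h1 : sinh t ≤ t * cosh t := sinh_le_mul_cosh ht.le
    have h2 : 0 ≤ sinh t := sinh_nonneg_iff.2 ht.le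
    -- `t cosh t ≥ sinh t` bounds the second derivative below by `s sinh t (4 cosh s - s sinh s)`
    nlinarith [mul_nonneg hs (mul_nonneg h2 (sub_nonneg.2 hs4)),
      mul_nonneg hs (mul_nonneg (sub_nonneg.2 h1) (cosh_pos s).le)]

lemma le_of_hasDerivAt_of_nonpos_of_nonneg {f f' : ℝ → ℝ} {a s t : ℝ}
    (hf : ∀ x, HasDerivAt f (f' x) x) (hle : ∀ x ∈ Icc a s, f' x ≤ 0)
    (hge : ∀ x, s ≤ x → 0 ≤ f' x) (ht : a ≤ t) : f s ≤ f t := by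
  have hcont : Continuous f := continuous_iff_continuousAt.2 fun x => (hf x).continuousAt
  rcases le_total t s with hts | hst
  · exact antitoneOn_of_hasDerivWithinAt_nonpos (convex_Icc a s) hcont.continuousOn
      (fun x _ => (hf x).hasDerivWithinAt) (fun x hx => hle x (interior_subset hx))
      ⟨ht, hts⟩ ⟨ht.trans hts, le_rfl⟩ hts
  · exact monotoneOn_of_hasDerivWithinAt_nonneg (convex_Ici s) hcont.continuousOn
      (fun x _ => (hf x).hasDerivWithinAt) (fun x hx => hge x (interior_subset hx))
      self_mem_Ici hst hst

/-- As functions of `t²`, the left side is the tangent line of the right side at `t² = s²`. -/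
theorem Real.sinh_cosh_tangent_ineq {s : ℝ} (hs : 0 < s) (hs4 : s * sinh s ≤ 4 * cosh s)
    (t : ℝ) :
    (sinh s * cosh s + s) * (t ^ 2 - s ^ 2) ≤
      2 * s * (t * sinh t * cosh s - s * sinh s * cosh t) := by
  set c := sinh s * cosh s + s
  set r : ℝ → ℝ := fun t => s * ((sinh t + t * cosh t) * cosh s - s * sinh s * sinh t) - c * t
  have hr : ConvexOn ℝ (Ici 0) r := convexOn_Ici_sinhCoshGap_deriv hs.le hs4
  have hr0 : r 0 = 0 := by simp [r]
  have hrs : r s = 0 := by simp only [r, c]; linear_combination s ^ 2 * cosh_sq_sub_sinh_sq s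
  have hr_nonpos : ∀ u ∈ Icc 0 s, r u ≤ 0 := fun u hu => by
    have h := hr.le_on_segment self_mem_Ici hs.le (by rwa [segment_eq_Icc hs.le])
    rwa [hr0, hrs, max_self] at h
  have hr_nonneg : ∀ u, s ≤ u → 0 ≤ r u := fun u hu =>
    hrs ▸ hr.le_right_of_left_le'' self_mem_Ici (hs.le.trans hu) hs hu (by rw [hr0, hrs])
  set H : ℝ → ℝ := fun t =>
    2 * s * (t * sinh t * cosh s - s * sinh s * cosh t) - c * (t ^ 2 - s ^ 2)
  have hH : ∀ t, HasDerivAt H (2 * r t) t := fun t => by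
    have h := (((hasDerivAt_id' t).mul (hasDerivAt_sinh t)).mul_const (cosh s)).sub
      ((hasDerivAt_cosh t).const_mul (s * sinh s))
    refine ((h.const_mul (2 * s)).sub (((hasDerivAt_pow 2 t).sub_const (s ^ 2)).const_mul
      c)).congr_deriv ?_
    simp only [r]; ring
  have hmin : ∀ t, 0 ≤ t → H s ≤ H t := fun t ht =>
    le_of_hasDerivAt_of_nonpos_of_nonneg hH (fun x hx => by linarith [hr_nonpos x hx])
      (fun x hx => by linarith [hr_nonneg x hx]) ht
  have hHs : H s = 0 := by simp only [H]; ring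
  have hHeven : H (-t) = H t := by simp only [H, sinh_neg, cosh_neg]; ring
  have : 0 ≤ H t := by
    rcases le_total 0 t with ht | ht
    · exact hHs ▸ hmin t ht
    · exact hHeven ▸ hHs ▸ hmin (-t) (neg_nonneg.2 ht)
  simp only [H] at this
  linarith

lemma integral_nonneg_of_add_comp_neg_nonneg {G : Type*} [MeasurableSpace G] [AddGroup G]
    [MeasurableNeg G] {μ : Measure G} [μ.IsNegInvariant] {F : G → ℝ} (hF : Integrable F μ)
    (hFeven : ∀ x, 0 ≤ F x + F (-x)) : 0 ≤ ∫ x, F x ∂μ := by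
  have h : 0 ≤ ∫ x, (F x + F (-x)) ∂μ := integral_nonneg hFeven
  rw [integral_add hF hF.comp_neg, integral_neg_eq_self] at h
  linarith

lemma integrable_of_ae_mem_finset {α E : Type*} [MeasurableSpace α] [NormedAddCommGroup E]
    {μ : Measure α} [IsFiniteMeasure μ] {s : Finset α} (hs : ∀ᵐ x ∂μ, x ∈ s) {f : α → E}
    (hf : AEStronglyMeasurable f μ) : Integrable f μ :=
  Integrable.of_bound hf _ <| hs.mono fun _ hx =>
    Finset.single_le_sum (f := fun x => ‖f x‖) (fun _ _ => norm_nonneg _) hx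

lemma isNegInvariant_map_mul_prod {μ ν : Measure ℝ} [SFinite μ] [SFinite ν] [μ.IsNegInvariant] :
    ((μ.prod ν).map fun p : ℝ × ℝ => p.1 * p.2).IsNegInvariant := by
  constructor
  rw [Measure.neg, Measure.map_map measurable_neg (by fun_prop)]
  have : Neg.neg ∘ (fun p : ℝ × ℝ => p.1 * p.2) =
      (fun p : ℝ × ℝ => p.1 * p.2) ∘ Prod.map Neg.neg id := by
    ext p; simp [neg_mul]
  rw [this, ← Measure.map_map (by fun_prop) (by fun_prop),
    ← Measure.map_prod_map _ _ measurable_neg measurable_id, Measure.map_neg_eq_self,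
    Measure.map_id]

theorem tilted_mean_lower_bound (ν : Measure ℝ) [IsProbabilityMeasure ν] [ν.IsNegInvariant]
    {V β : ℝ} (hV : 0 < V) (hβ : 0 < β) (hβV : β * V ≤ 2) (hm2 : ∫ w, w ^ 2 ∂ν = V ^ 2)
    (hexp : Integrable (fun w => exp (β * w)) ν)
    (hmexp : Integrable (fun w => w * exp (β * w)) ν) :
    V * tanh (β * V) ≤ (∫ w, w * exp (β * w) ∂ν) / ∫ w, exp (β * w) ∂ν := by
  set s := β * V
  have hs : 0 < s := mul_pos hβ hV
  have hs4 : s * sinh s ≤ 4 * cosh s := by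
    nlinarith [sinh_lt_cosh s, sinh_pos_iff.2 hs]
  have hsq : Integrable (fun w : ℝ => w ^ 2) ν :=
    Integrable.of_integral_ne_zero (by rw [hm2]; positivity)
  set c := sinh s * cosh s + s
  have hF : 0 ≤ ∫ w, (2 * s * β * cosh s * (w * exp (β * w)) - 2 * s ^ 2 * sinh s * exp (β * w)
      - c * β ^ 2 * w ^ 2 + c * s ^ 2) ∂ν := by
    refine integral_nonneg_of_add_comp_neg_nonneg (by fun_prop) fun w => ?_
    -- the even part of the integrand is the gap of `sinh_cosh_tangent_ineq` at `t = β w`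
    have h := sinh_cosh_tangent_ineq hs hs4 (β * w)
    rw [sinh_eq (β * w), cosh_eq (β * w)] at h
    rw [mul_neg]
    linear_combination 2 * h
  set N := ∫ w, w * exp (β * w) ∂ν
  set D := ∫ w, exp (β * w) ∂ν
  rw [integral_add (by fun_prop) (by fun_prop), integral_sub (by fun_prop) (by fun_prop),
    integral_sub (by fun_prop) (by fun_prop), integral_const_mul,
    integral_const_mul, integral_const_mul, hm2, integral_const, probReal_univ, one_smul] at hF
  have hD : 0 < D := integral_exp_pos hexp
  have hND : V * sinh s * D ≤ N * cosh s := by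
    have h2sβ : 0 < 2 * s * β := by positivity
    refine le_of_mul_le_mul_left ?_ h2sβ
    linear_combination hF
  rw [le_div_iff₀ hD, tanh_eq_sinh_div_cosh, mul_div_assoc', div_mul_eq_mul_div,
    div_le_iff₀ (cosh_pos s)]
  exact hND

/-- **Lemma.** Let `θ` be a symmetric probability measure on `ℝ` supported on a finite
set, with variance `V = ∫ x² dθ > 0`, and let `β > 0` satisfy `βV ≤ 2`. Then for the
tilted product measure `P_β(dy dz) ∝ exp(βyz) θ(dy) θ(dz)`,
`E^{P_β}[yz] ≥ V tanh(βV)`. -/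
theorem tilted_covariance_lower_bound
    (θ : Measure ℝ) [IsProbabilityMeasure θ]
    (hsym : θ.map (fun x => -x) = θ)
    (hfin : ∃ s : Finset ℝ, θ ((s : Set ℝ)ᶜ) = 0)
    (V : ℝ) (hV : 0 < V) (hVar : V = ∫ x, x ^ 2 ∂θ)
    (β : ℝ) (hβ : 0 < β) (hβV : β * V ≤ 2) :
    V * Real.tanh (β * V) ≤
      (∫ p : ℝ × ℝ, p.1 * p.2 * Real.exp (β * p.1 * p.2) ∂(θ.prod θ)) /
        (∫ p : ℝ × ℝ, Real.exp (β * p.1 * p.2) ∂(θ.prod θ)) := by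
  have : θ.IsNegInvariant := ⟨hsym⟩
  obtain ⟨s, hs⟩ := hfin
  have hmul : Measurable fun p : ℝ × ℝ => p.1 * p.2 := by fun_prop
  set ν := (θ.prod θ).map fun p : ℝ × ℝ => p.1 * p.2
  have : IsProbabilityMeasure ν := Measure.isProbabilityMeasure_map hmul.aemeasurable
  have : ν.IsNegInvariant := isNegInvariant_map_mul_prod
  have hνs : ∀ᵐ w ∂ν, w ∈ (s ×ˢ s).image fun p : ℝ × ℝ => p.1 * p.2 := by
    have hθs : ∀ᵐ x ∂θ, x ∈ s := ae_iff.2 hs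
    refine (ae_map_iff hmul.aemeasurable (Finset.measurableSet _)).2 ?_
    filter_upwards [Measure.quasiMeasurePreserving_fst.ae hθs,
      Measure.quasiMeasurePreserving_snd.ae hθs] with p h1 h2
    exact Finset.mem_image.2 ⟨p, Finset.mem_product.2 ⟨h1, h2⟩, rfl⟩
  have hm2 : ∫ w, w ^ 2 ∂ν = V ^ 2 := by
    rw [integral_map hmul.aemeasurable (by fun_prop), hVar, sq, ← integral_prod_mul]
    simp only [mul_pow]
  have key := tilted_mean_lower_bound ν hV hβ hβV hm2
    (integrable_of_ae_mem_finset hνs (by fun_prop)) (integrable_of_ae_mem_finset hνs (by fun_prop))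
  rw [integral_map hmul.aemeasurable (by fun_prop),
    integral_map hmul.aemeasurable (by fun_prop)] at key
  simpa only [mul_assoc] using key
end

section
/- Fix α > 0 and 0 < c < log₂(1 + tanh 2), and define the recursion V_1 = 1, V_{n+1} = (1 + tanh(min(α·2^{−cn}·V_n, 2)))·V_n for n ≥ 1. If α > α_*(c) := 2^c · arctanh(2^c − 1), then V_n → ∞ as n → ∞; moreover there is a constant C > 0 such that V_n ≥ C·(1 + tanh 2)^n for all sufficiently large n. -/
open Filter

/-- The inverse hyperbolic tangent. -/
noncomputable def arctanh (x : ℝ) : ℝ := (1 / 2) * Real.log ((1 + x) / (1 - x))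

/-!
With `x n = α 2^{-cn} V n` the recursion becomes `x (n+1) = g(x n) x n`, where
`g t = 2^{-c} (1 + tanh (min t 2))` is monotone. The threshold `α > α_*(c)` says exactly that
`g(x 1) > 1`, so `x` grows at least geometrically and eventually exceeds `2`. From then on the
`min` is saturated and `V` is multiplied by `1 + tanh 2` at every step.
-/

open Real

lemma arctanh_eq_artanh {y : ℝ} (hy : y ∈ Set.Icc (-1) 1) : arctanh y = artanh y :=
  (artanh_eq_half_log hy).symm

theorem Real.tanh_strictMono : StrictMono tanh := fun a b hab => by
  rwa [← artanh_lt_artanh_iff ⟨neg_one_lt_tanh a, tanh_lt_one a⟩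
    ⟨neg_one_lt_tanh b, tanh_lt_one b⟩, artanh_tanh, artanh_tanh]

theorem Real.lt_tanh_iff_artanh_lt {y t : ℝ} (hy : y ∈ Set.Ioo (-1) 1) :
    y < tanh t ↔ artanh y < t := by
  rw [← artanh_lt_artanh_iff hy ⟨neg_one_lt_tanh t, tanh_lt_one t⟩, artanh_tanh]

theorem tendsto_atTop_of_succ_eq_mul_self {g : ℝ → ℝ} {x : ℕ → ℝ} (hg : Monotone g)
    (hx0 : 0 < x 0) (hg0 : 1 < g (x 0)) (hx : ∀ n, x (n + 1) = g (x n) * x n) :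
    Tendsto x atTop atTop := by
  have hgeom : ∀ n, x 0 * g (x 0) ^ n ≤ x n := by
    intro n
    induction n with
    | zero => simp
    | succ n ih =>
      have hxn : x 0 ≤ x n := (le_mul_of_one_le_right hx0.le (one_le_pow₀ hg0.le)).trans ih
      calc x 0 * g (x 0) ^ (n + 1) = g (x 0) * (x 0 * g (x 0) ^ n) := by ring
        _ ≤ g (x n) * x n :=
          mul_le_mul (hg hxn) ih (mul_nonneg hx0.le (pow_nonneg (by linarith) n))
            (by linarith [hg hxn])
        _ = x (n + 1) := (hx n).symm
  exact tendsto_atTop_mono hgeom ((tendsto_pow_atTop_atTop_of_one_lt hg0).const_mul_atTop hx0)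

theorem eq_div_pow_mul_pow_of_succ_eq {V : ℕ → ℝ} {r : ℝ} {N : ℕ} (hr : r ≠ 0)
    (h : ∀ n ≥ N, V (n + 1) = r * V n) : ∀ n ≥ N, V n = V N / r ^ N * r ^ n := by
  intro n hn
  induction n, hn using Nat.le_induction with
  | base => field_simp
  | succ n hn ih => rw [h n hn, ih, pow_succ]; ring

theorem pos_of_succ_eq_one_add_tanh_mul {V s : ℕ → ℝ} (hV1 : 0 < V 1)
    (hrec : ∀ n ≥ 1, V (n + 1) = (1 + tanh (s n)) * V n) : ∀ n ≥ 1, 0 < V n := by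
  intro n hn
  induction n, hn using Nat.le_induction with
  | base => exact hV1
  | succ n hn ih => rw [hrec n hn]; exact mul_pos (by linarith [neg_one_lt_tanh (s n)]) ih

noncomputable def growthFactor (c t : ℝ) : ℝ := 2 ^ (-c) * (1 + tanh (min t 2))

lemma growthFactor_monotone (c : ℝ) : Monotone (growthFactor c) := fun _ _ hst =>
  mul_le_mul_of_nonneg_left
    (add_le_add_right (tanh_strictMono.monotone (min_le_min_right 2 hst)) 1)
    (rpow_nonneg zero_le_two _)

lemma one_lt_growthFactor {c t : ℝ} (hc : (2 : ℝ) ^ c < 1 + tanh 2)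
    (ht : arctanh ((2 : ℝ) ^ c - 1) < t) : 1 < growthFactor c t := by
  have hy : (2 : ℝ) ^ c - 1 ∈ Set.Ioo (-1) 1 :=
    ⟨by linarith [rpow_pos_of_pos two_pos c], by linarith [tanh_lt_one 2]⟩
  have key : (2 : ℝ) ^ c < 1 + tanh (min t 2) := by
    rcases min_cases t 2 with ⟨h, _⟩ | ⟨h, _⟩ <;> rw [h]
    · rw [arctanh_eq_artanh (Set.Ioo_subset_Icc_self hy), ← lt_tanh_iff_artanh_lt hy] at ht
      linarith
    · exact hc
  rwa [growthFactor, rpow_neg zero_le_two, ← div_eq_inv_mul, one_lt_div (by positivity)]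

lemma scaled_succ_eq_growthFactor_mul {α c : ℝ} {V : ℕ → ℝ} {n : ℕ}
    (hVn : V (n + 1) = (1 + tanh (min (α * (2 : ℝ) ^ (-(c * n)) * V n) 2)) * V n) :
    α * (2 : ℝ) ^ (-(c * ↑(n + 1))) * V (n + 1) =
      growthFactor c (α * (2 : ℝ) ^ (-(c * n)) * V n) * (α * (2 : ℝ) ^ (-(c * n)) * V n) := by
  rw [hVn, growthFactor, Nat.cast_succ, show -(c * (n + 1)) = -c + -(c * n) by ring,
    rpow_add two_pos]
  ring

theorem recursive_variance_growth_general
    (α c : ℝ) (hα : 0 < α) (hccrit : c < Real.logb 2 (1 + Real.tanh 2))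
    (hαstar : (2 : ℝ) ^ c * arctanh ((2 : ℝ) ^ c - 1) < α)
    (V : ℕ → ℝ) (hV1 : V 1 = 1)
    (hrec : ∀ n : ℕ, 1 ≤ n →
      V (n + 1) = (1 + Real.tanh (min (α * (2 : ℝ) ^ (-(c * n)) * V n) 2)) * V n) :
    Tendsto V atTop atTop ∧
      ∃ C > (0 : ℝ), ∀ᶠ n in atTop, C * (1 + Real.tanh 2) ^ n ≤ V n := by
  have hr : 1 < 1 + tanh 2 := by simpa [tanh_zero] using tanh_strictMono two_pos
  have h2c : (2 : ℝ) ^ c < 1 + tanh 2 := by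
    have := rpow_lt_rpow_of_exponent_lt one_lt_two hccrit
    rwa [rpow_logb two_pos (by norm_num) (by linarith)] at this
  have hVpos := pos_of_succ_eq_one_add_tanh_mul (hV1 ▸ one_pos) hrec
  set x : ℕ → ℝ := fun n => α * (2 : ℝ) ^ (-(c * ↑(n + 1))) * V (n + 1)
  have hx0 : x 0 = α / 2 ^ c := by simp [x, hV1, rpow_neg zero_le_two, div_eq_mul_inv]
  have hx0crit : arctanh ((2 : ℝ) ^ c - 1) < x 0 := by
    rwa [hx0, lt_div_iff₀ (by positivity), mul_comm]
  have hxlarge := (tendsto_atTop_of_succ_eq_mul_self (growthFactor_monotone c)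
    (by rw [hx0]; positivity) (one_lt_growthFactor h2c hx0crit)
    fun n => scaled_succ_eq_growthFactor_mul (hrec (n + 1) (by omega))).eventually_ge_atTop 2
  obtain ⟨N, hN⟩ := eventually_atTop.1 hxlarge
  have hsat : ∀ n ≥ N + 1, V (n + 1) = (1 + tanh 2) * V n := by
    intro n hn
    obtain ⟨m, rfl⟩ : ∃ m, n = m + 1 := ⟨n - 1, by omega⟩
    rw [hrec _ (by omega), min_eq_right (hN m (by omega))]
  set C := V (N + 1) / (1 + tanh 2) ^ (N + 1)
  have hC : 0 < C := div_pos (hVpos _ (by omega)) (by positivity)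
  have hV : ∀ᶠ n in atTop, V n = C * (1 + tanh 2) ^ n :=
    eventually_atTop.2 ⟨N + 1, eq_div_pow_mul_pow_of_succ_eq (by positivity) hsat⟩
  refine ⟨?_, C, hC, hV.mono fun _ h => h.ge⟩
  exact ((tendsto_pow_atTop_atTop_of_one_lt hr).const_mul_atTop hC).congr'
    (hV.mono fun _ h => h.symm)

/-- **Lemma (growth of the recursive variance).**
Fix `α > 0` and `0 < c < log₂(1 + tanh 2)`, and let `V_1 = 1`,
`V_{n+1} = (1 + tanh(min(α 2^{−cn} V_n, 2))) V_n` for `n ≥ 1`.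
If `α > α_*(c) = 2^c arctanh(2^c − 1)`, then `V_n → ∞`; moreover there is `C > 0` with
`V_n ≥ C (1 + tanh 2)^n` for all large `n`. -/
theorem recursive_variance_growth
    (α c : ℝ) (hα : 0 < α) (hc : 0 < c) (hccrit : c < Real.logb 2 (1 + Real.tanh 2))
    (hαstar : (2 : ℝ) ^ c * arctanh ((2 : ℝ) ^ c - 1) < α)
    (V : ℕ → ℝ) (hV1 : V 1 = 1)
    (hrec : ∀ n : ℕ, 1 ≤ n →
      V (n + 1) = (1 + Real.tanh (min (α * (2 : ℝ) ^ (-(c * n)) * V n) 2)) * V n) :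
    Tendsto V atTop atTop ∧
      ∃ C > (0 : ℝ), ∀ᶠ n in atTop, C * (1 + Real.tanh 2) ^ n ≤ V n :=
  recursive_variance_growth_general α c hα hccrit hαstar V hV1 hrec
end

section
/- Let N ∈ ℕ, k ∈ ℕ, γ = 2k, and for φ ∈ {−1,1}^N set Φ(φ) = N^{−1/2}·Σ_{j=1}^N φ_j. Then there exist nonnegative coefficients c_S ≥ 0, indexed by the subsets S ⊆ {1,…,N} of even cardinality, such that for every φ ∈ {−1,1}^N, Φ(φ)^γ − Φ(φ)² = Σ_S c_S·∏_{j∈S} φ_j. -/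
open Finset symmDiff

namespace SpinAux

variable {N : ℕ}

/-- Convolution (multiplication of reduced spin polynomials) via symmetric difference. -/
def mulc (c d : Finset (Fin N) → ℝ) : Finset (Fin N) → ℝ :=
  fun S => ∑ A : Finset (Fin N), c A * d (A ∆ S)

/-- Evaluation of a reduced spin polynomial. -/
def evalc (c : Finset (Fin N) → ℝ) (σ : Fin N → ℝ) : ℝ :=
  ∑ S : Finset (Fin N), c S * ∏ j ∈ S, σ j

/-- The unit polynomial. -/
def deltac : Finset (Fin N) → ℝ := fun S => if S = ∅ then 1 else 0

/-- Powers. -/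
def powc (c : Finset (Fin N) → ℝ) : ℕ → Finset (Fin N) → ℝ
  | 0 => deltac
  | n + 1 => mulc c (powc c n)

lemma card_symmDiff_even (A B : Finset (Fin N)) (hA : ¬ Even A.card ↔ ¬ Even B.card) :
    Even (A ∆ B).card := by
  have hd : Disjoint (A ∆ B) (A ∩ B) := by
    simpa using disjoint_symmDiff_inf (a := A) (b := B)
  have hu : (A ∆ B) ∪ (A ∩ B) = A ∪ B := by
    simpa using symmDiff_sup_inf (a := A) (b := B)
  have h1 : (A ∆ B).card + (A ∩ B).card = (A ∪ B).card := by
    rw [← hu, Finset.card_union_of_disjoint hd]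
  have h2 : (A ∪ B).card + (A ∩ B).card = A.card + B.card :=
    Finset.card_union_add_card_inter A B
  have h3 : (A ∆ B).card + 2 * (A ∩ B).card = A.card + B.card := by omega
  rcases Nat.even_or_odd A.card with hA' | hA'
  · have hB' : Even B.card := by
      by_contra hB'; exact (hA.mpr hB') (by simpa using hA')
    rcases hA' with ⟨a, ha⟩; rcases hB' with ⟨b, hb⟩
    exact ⟨a + b - (A ∩ B).card, by omega⟩
  · have hB' : ¬ Even B.card := hA.mp (Nat.not_even_iff_odd.mpr hA')
    rcases hA' with ⟨a, ha⟩
    rcases Nat.not_even_iff_odd.mp hB' with ⟨b, hb⟩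
    exact ⟨a + b + 1 - (A ∩ B).card, by omega⟩

lemma prod_symmDiff {σ : Fin N → ℝ} (hσ : ∀ j, σ j = 1 ∨ σ j = -1) (A B : Finset (Fin N)) :
    ∏ j ∈ A ∆ B, σ j = (∏ j ∈ A, σ j) * ∏ j ∈ B, σ j := by
  have hsq : (∏ j ∈ A ∩ B, σ j) * (∏ j ∈ A ∩ B, σ j) = 1 := by
    rw [← Finset.prod_mul_distrib]
    refine Finset.prod_eq_one fun j _ => ?_
    rcases hσ j with h | h <;> rw [h] <;> norm_num
  have hdisj : Disjoint (A ∆ B) (A ∩ B) := by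
    simpa using disjoint_symmDiff_inf (a := A) (b := B)
  have hu : (A ∆ B) ∪ (A ∩ B) = A ∪ B := by
    simpa using symmDiff_sup_inf (a := A) (b := B)
  calc ∏ j ∈ A ∆ B, σ j
      = (∏ j ∈ A ∆ B, σ j) * ((∏ j ∈ A ∩ B, σ j) * (∏ j ∈ A ∩ B, σ j)) := by
        rw [hsq, mul_one]
    _ = ((∏ j ∈ (A ∆ B) ∪ (A ∩ B), σ j) * (∏ j ∈ A ∩ B, σ j)) := by
        rw [Finset.prod_union hdisj]; ring
    _ = (∏ j ∈ A ∪ B, σ j) * (∏ j ∈ A ∩ B, σ j) := by rw [hu]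
    _ = (∏ j ∈ A, σ j) * ∏ j ∈ B, σ j := Finset.prod_union_inter

lemma evalc_mulc (c d : Finset (Fin N) → ℝ) {σ : Fin N → ℝ}
    (hσ : ∀ j, σ j = 1 ∨ σ j = -1) :
    evalc (mulc c d) σ = evalc c σ * evalc d σ := by
  unfold evalc mulc
  rw [Finset.sum_mul_sum]
  simp_rw [Finset.sum_mul]
  rw [Finset.sum_comm]
  refine Finset.sum_congr rfl fun A _ => ?_
  have hinv : Function.Involutive (fun S : Finset (Fin N) => A ∆ S) := fun S => by
    simp [symmDiff_symmDiff_cancel_left]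
  refine (Fintype.sum_bijective _ hinv.bijective _ _ (fun S => ?_))
  show c A * d (A ∆ S) * ∏ j ∈ S, σ j
    = (c A * ∏ j ∈ A, σ j) * (d (A ∆ S) * ∏ j ∈ A ∆ S, σ j)
  have hprod : (∏ j ∈ A, σ j) * ∏ j ∈ A ∆ S, σ j = ∏ j ∈ S, σ j := by
    rw [← prod_symmDiff hσ, symmDiff_symmDiff_cancel_left]
  rw [← hprod]; ring

lemma evalc_deltac {σ : Fin N → ℝ} : evalc (deltac (N := N)) σ = 1 := by
  unfold evalc deltac
  simp only [ite_mul, zero_mul, one_mul]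
  rw [Finset.sum_ite_eq' Finset.univ (∅ : Finset (Fin N)) (fun S => ∏ j ∈ S, σ j)]
  simp

lemma evalc_powc (c : Finset (Fin N) → ℝ) {σ : Fin N → ℝ}
    (hσ : ∀ j, σ j = 1 ∨ σ j = -1) (n : ℕ) :
    evalc (powc c n) σ = (evalc c σ) ^ n := by
  induction n with
  | zero => simpa [powc] using evalc_deltac
  | succ n ih => rw [powc, evalc_mulc _ _ hσ, ih, pow_succ]; ring

lemma mulc_nonneg {c d : Finset (Fin N) → ℝ} (hc : ∀ S, 0 ≤ c S) (hd : ∀ S, 0 ≤ d S) :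
    ∀ S, 0 ≤ mulc c d S := fun S =>
  Finset.sum_nonneg fun A _ => mul_nonneg (hc A) (hd _)

lemma mulc_even {c d : Finset (Fin N) → ℝ}
    (hc : ∀ S, ¬ Even S.card → c S = 0) (hd : ∀ S, ¬ Even S.card → d S = 0) :
    ∀ S, ¬ Even S.card → mulc c d S = 0 := by
  intro S hS
  refine Finset.sum_eq_zero fun A _ => ?_
  by_cases hA : Even A.card
  · have hAS : ¬ Even (A ∆ S).card := by
      intro h
      have := card_symmDiff_even A (A ∆ S)
        ⟨fun h' => absurd hA h', fun h' => absurd h h'⟩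
      rw [symmDiff_symmDiff_cancel_left] at this
      exact hS this
    rw [hd _ hAS, mul_zero]
  · rw [hc _ hA, zero_mul]

lemma powc_nonneg {c : Finset (Fin N) → ℝ} (hc : ∀ S, 0 ≤ c S) (n : ℕ) :
    ∀ S, 0 ≤ powc c n S := by
  induction n with
  | zero => intro S; unfold powc deltac; positivity
  | succ n ih => exact mulc_nonneg hc ih

lemma deltac_even : ∀ S : Finset (Fin N), ¬ Even S.card → deltac S = 0 := by
  intro S hS
  unfold deltac
  split
  · next h => subst h; simp at hS
  · rfl

lemma powc_even {c : Finset (Fin N) → ℝ} (hc : ∀ S, ¬ Even S.card → c S = 0) (n : ℕ) :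
    ∀ S, ¬ Even S.card → powc c n S = 0 := by
  induction n with
  | zero => exact deltac_even
  | succ n ih => exact mulc_even hc ih

end SpinAux

open SpinAux

/-- **Proposition.** Let `γ = 2k` with `k ≥ 1` and, for a spin configuration
`σ ∈ {−1,1}^N`, set `Φ(σ) = N^{−1/2} ∑_j σ_j`. Then `Φ^γ − Φ²` is a nonnegative linear
combination of even spin monomials `∏_{j ∈ S} σ_j` (`S ⊆ {1,…,N}`, `|S|` even). -/
theorem gamma_minus_square_positive_combination
    (N k : ℕ) (hk : 1 ≤ k) :
    ∃ c : Finset (Fin N) → ℝ,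
      (∀ S, 0 ≤ c S) ∧
      (∀ S, ¬ Even S.card → c S = 0) ∧
      ∀ σ : Fin N → ℝ, (∀ j, σ j = 1 ∨ σ j = -1) →
        ((∑ j, σ j) / Real.sqrt N) ^ (2 * k) - ((∑ j, σ j) / Real.sqrt N) ^ 2 =
          ∑ S : Finset (Fin N), c S * ∏ j ∈ S, σ j := by
  rcases Nat.eq_zero_or_pos N with hN | hN
  · subst hN
    refine ⟨0, by simp, by simp, fun σ _ => ?_⟩
    simp [zero_pow (by omega : 2 * k ≠ 0)]
  · have hNpos : (0:ℝ) < N := by exact_mod_cast hN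
    set r : ℝ := (Real.sqrt N)⁻¹ with hr
    have hrpos : 0 ≤ r := by positivity
    have hr2 : r * r = (N : ℝ)⁻¹ := by
      rw [hr, ← mul_inv]
      congr 1
      exact Real.mul_self_sqrt (le_of_lt hNpos)
    -- the polynomial Φ
    set f : Finset (Fin N) → ℝ := fun S => if S.card = 1 then r else 0 with hf
    have hfnn : ∀ S, 0 ≤ f S := fun S => by
      rw [hf]; dsimp only; split
      · exact hrpos
      · exact le_refl 0
    have hfilter : (Finset.univ.filter (fun S : Finset (Fin N) => S.card = 1))
        = Finset.univ.image (fun j : Fin N => ({j} : Finset (Fin N))) := by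
      ext S
      simp [Finset.card_eq_one, eq_comm]
    have hsingle : Function.Injective (fun j : Fin N => ({j} : Finset (Fin N))) :=
      fun a b h => Finset.singleton_injective h
    -- evaluation of f
    have hevalf : ∀ σ : Fin N → ℝ, evalc f σ = (∑ j, σ j) / Real.sqrt N := by
      intro σ
      unfold evalc
      rw [hf]
      simp_rw [ite_mul, zero_mul]
      rw [← Finset.sum_filter, hfilter, Finset.sum_image (fun a _ b _ h => hsingle h)]
      simp only [Finset.prod_singleton]
      rw [div_eq_mul_inv, ← hr, Finset.sum_mul]
      exact Finset.sum_congr rfl fun j _ => mul_comm r (σ j)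
    -- g = Φ²
    set g : Finset (Fin N) → ℝ := mulc f f with hg
    have hgnn : ∀ S, 0 ≤ g S := mulc_nonneg hfnn hfnn
    have hfcard : ∀ A : Finset (Fin N), f A ≠ 0 → A.card = 1 := by
      intro A h
      by_contra hc
      exact h (if_neg hc)
    have hgeven : ∀ S, ¬ Even S.card → g S = 0 := by
      intro S hS
      refine Finset.sum_eq_zero fun A _ => ?_
      by_cases hA : f A = 0
      · rw [hA, zero_mul]
      · by_cases hAS : f (A ∆ S) = 0
        · rw [hAS, mul_zero]
        · exfalso
          have h1 := hfcard _ hA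
          have h2 := hfcard _ hAS
          have hev : Even (A ∆ (A ∆ S)).card := by
            refine card_symmDiff_even A (A ∆ S) ?_
            rw [h1, h2]
          rw [symmDiff_symmDiff_cancel_left] at hev
          exact hS hev
    -- g ∅ = 1
    have hgempty : g ∅ = 1 := by
      show ∑ A : Finset (Fin N), f A * f (A ∆ ∅) = 1
      have hterm : ∀ A : Finset (Fin N), f A * f (A ∆ ∅)
          = if A.card = 1 then r * r else 0 := by
        intro A
        have hA : A ∆ ∅ = A := by simpa using symmDiff_bot (a := A)
        rw [hA, hf]; dsimp only; split <;> simp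
      simp_rw [hterm]
      rw [← Finset.sum_filter, hfilter, Finset.sum_const,
        Finset.card_image_of_injective _ hsingle, Finset.card_univ, Fintype.card_fin,
        nsmul_eq_mul, hr2]
      exact mul_inv_cancel₀ (ne_of_gt hNpos)
    -- g' = Φ² − 1
    set g' : Finset (Fin N) → ℝ := fun S => g S - deltac S with hg'
    have hg'nn : ∀ S, 0 ≤ g' S := by
      intro S
      rw [hg']; dsimp only
      unfold deltac
      split
      · next h => subst h; rw [hgempty]; norm_num
      · simpa using hgnn S
    have hg'even : ∀ S, ¬ Even S.card → g' S = 0 := by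
      intro S hS
      rw [hg']; dsimp only
      rw [hgeven S hS, deltac_even S hS, sub_zero]
    -- geometric sum
    set h : Finset (Fin N) → ℝ := fun S => ∑ m ∈ Finset.range (k-1), powc g m S with hh
    have hhnn : ∀ S, 0 ≤ h S := fun S =>
      Finset.sum_nonneg fun m _ => powc_nonneg hgnn m S
    have hheven : ∀ S, ¬ Even S.card → h S = 0 := fun S hS =>
      Finset.sum_eq_zero fun m _ => powc_even hgeven m S hS
    refine ⟨mulc g (mulc g' h),
      mulc_nonneg hgnn (mulc_nonneg hg'nn hhnn),
      mulc_even hgeven (mulc_even hg'even hheven),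
      fun σ hσ => ?_⟩
    have hΦ := hevalf σ
    set Φ := (∑ j, σ j) / Real.sqrt N with hΦdef
    have e1 : evalc g σ = Φ ^ 2 := by
      rw [hg, evalc_mulc _ _ hσ, hΦ]; ring
    have e2 : evalc g' σ = Φ ^ 2 - 1 := by
      have he : evalc g' σ = evalc g σ - evalc deltac σ := by
        unfold evalc
        rw [hg']
        simp [sub_mul, Finset.sum_sub_distrib]
      rw [he, e1, evalc_deltac]
    have e3 : evalc h σ = ∑ m ∈ Finset.range (k-1), (Φ ^ 2) ^ m := by
      have he : evalc h σ = ∑ m ∈ Finset.range (k-1), evalc (powc g m) σ := by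
        unfold evalc
        rw [hh]
        simp_rw [Finset.sum_mul]
        rw [Finset.sum_comm]
      rw [he]
      exact Finset.sum_congr rfl fun m _ => by rw [evalc_powc _ hσ, e1]
    show Φ ^ (2 * k) - Φ ^ 2 = evalc (mulc g (mulc g' h)) σ
    rw [evalc_mulc _ _ hσ, e1, evalc_mulc _ _ hσ, e2, e3]
    have hgeom : (∑ m ∈ Finset.range (k-1), (Φ ^ 2) ^ m) * (Φ ^ 2 - 1)
        = (Φ ^ 2) ^ (k - 1) - 1 := geom_sum_mul _ _
    have hk1 : k - 1 + 1 = k := Nat.succ_pred_eq_of_pos hk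
    rw [pow_mul]
    calc (Φ ^ 2) ^ k - Φ ^ 2 = Φ ^ 2 * ((Φ ^ 2) ^ (k - 1) - 1) := by
          rw [mul_sub, mul_one, ← pow_succ', hk1]
      _ = Φ ^ 2 * ((Φ ^ 2 - 1) * ∑ m ∈ Finset.range (k-1), (Φ ^ 2) ^ m) := by
          rw [mul_comm (Φ ^ 2 - 1), hgeom]
end

section
/- Let γ = 2k with k ∈ ℕ, c > 0, and ξ = γ/2 + c. For the one-dimensional simple random walk (i.i.d. increments uniform on {−1,1}), let P̂_{α,T,γ,ξ} be the measure on {−1,1}^T proportional to exp(α·Σ_{0≤i<j≤T} |x_j − x_i|^γ / (j−i)^ξ) times the uniform measure, where x_j = φ_1 + ⋯ + φ_j. Then E^{P̂_{α,T,γ,ξ}}[x_T²] ≥ E^{P̂_{α,T,2,1+c}}[x_T²]. -/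
open Finset

/-- The long-range interaction energy `∑_{0 ≤ i < j ≤ T} |x_j − x_i|^γ / (j−i)^ξ` for the
one-dimensional simple random walk `x_j = φ_1 + ⋯ + φ_j` generated by the spins `σ`
(so `x_j − x_i = ∑_{i ≤ k < j} φ_{k+1}` in `0`-based indexing). -/
noncomputable def lrEnergy (T : ℕ) (γ ξ : ℝ) (σ : Spins T) : ℝ :=
  ∑ j ∈ Finset.range (T + 1), ∑ i ∈ Finset.range j,
    |∑ k ∈ Finset.Ico i j, spinVal σ k| ^ γ / ((j - i : ℕ) : ℝ) ^ ξ

/-- Expectation of `f` under the long-range tilted measure `P̂_{α,T,γ,ξ}` over the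
one-dimensional simple random walk. -/
noncomputable def lrExp (T : ℕ) (α γ ξ : ℝ) (f : Spins T → ℝ) : ℝ :=
  (∑ σ : Spins T, f σ * Real.exp (α * lrEnergy T γ ξ σ)) /
    (∑ σ : Spins T, Real.exp (α * lrEnergy T γ ξ σ))

lemma spin_cases {T : ℕ} (σ : Spins T) (i : Fin T) : ((σ i : ℝ) = -1 ∨ (σ i : ℝ) = 1) := by
  have h := (σ i).2
  rw [Finset.mem_insert, Finset.mem_singleton] at h
  exact h

lemma spin_mul_self {T : ℕ} (σ : Spins T) (i : Fin T) : (σ i : ℝ) * (σ i : ℝ) = 1 := by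
  rcases spin_cases σ i with h | h <;> rw [h] <;> norm_num

/-- Ferromagnetic cone: nonnegative combinations of spin monomials. -/
inductive IsCone {T : ℕ} : (Spins T → ℝ) → Prop
  | mono (c : ℝ) (hc : 0 ≤ c) (A : Finset (Fin T)) : IsCone (fun σ => c * ∏ i ∈ A, (σ i : ℝ))
  | add {f g : Spins T → ℝ} (hf : IsCone f) (hg : IsCone g) : IsCone (fun σ => f σ + g σ)

lemma isCone_congr {T : ℕ} {f g : Spins T → ℝ} (hf : IsCone f) (h : ∀ σ, f σ = g σ) :
    IsCone g := by
  have : f = g := funext h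
  rwa [← this]

lemma prod_mul_prod {T : ℕ} (σ : Spins T) (A B : Finset (Fin T)) :
    (∏ i ∈ A, (σ i : ℝ)) * ∏ i ∈ B, (σ i : ℝ) = ∏ i ∈ (A \ B) ∪ (B \ A), (σ i : ℝ) := by
  classical
  have hA : (∏ i ∈ A \ B, (σ i : ℝ)) * ∏ i ∈ A ∩ B, (σ i : ℝ) = ∏ i ∈ A, (σ i : ℝ) := by
    rw [← Finset.sdiff_inter_self_left A B]
    exact Finset.prod_sdiff (Finset.inter_subset_left)
  have hB : (∏ i ∈ B \ A, (σ i : ℝ)) * ∏ i ∈ A ∩ B, (σ i : ℝ) = ∏ i ∈ B, (σ i : ℝ) := by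
    rw [← Finset.sdiff_inter_self_left B A, Finset.inter_comm B A]
    exact Finset.prod_sdiff (by rw [Finset.inter_comm]; exact Finset.inter_subset_left)
  have hsq : (∏ i ∈ A ∩ B, (σ i : ℝ)) * ∏ i ∈ A ∩ B, (σ i : ℝ) = 1 := by
    rw [← Finset.prod_mul_distrib]
    exact Finset.prod_eq_one fun i _ => spin_mul_self σ i
  have hdisj : Disjoint (A \ B) (B \ A) := by
    simp [Finset.disjoint_left, Finset.mem_sdiff]; tauto
  rw [Finset.prod_union hdisj, ← hA, ← hB]
  calc (∏ i ∈ A \ B, (σ i : ℝ)) * (∏ i ∈ A ∩ B, (σ i : ℝ)) *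
        ((∏ i ∈ B \ A, (σ i : ℝ)) * ∏ i ∈ A ∩ B, (σ i : ℝ))
      = (∏ i ∈ A \ B, (σ i : ℝ)) * (∏ i ∈ B \ A, (σ i : ℝ)) *
        ((∏ i ∈ A ∩ B, (σ i : ℝ)) * ∏ i ∈ A ∩ B, (σ i : ℝ)) := by ring
    _ = _ := by rw [hsq, mul_one]

lemma prod_spin_cases {T : ℕ} (σ : Spins T) (A : Finset (Fin T)) :
    (∏ i ∈ A, (σ i : ℝ)) = 1 ∨ (∏ i ∈ A, (σ i : ℝ)) = -1 := by
  classical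
  have := prod_mul_prod σ A A
  simp only [Finset.sdiff_self, Finset.union_self, Finset.prod_empty] at this
  exact mul_self_eq_one_iff.mp this

lemma IsCone.mul {T : ℕ} {f g : Spins T → ℝ} (hf : IsCone f) (hg : IsCone g) :
    IsCone (fun σ => f σ * g σ) := by
  classical
  induction hf with
  | mono c hc A =>
    induction hg with
    | mono d hd B =>
      refine isCone_congr (IsCone.mono (c * d) (mul_nonneg hc hd) ((A \ B) ∪ (B \ A))) ?_
      intro σ
      rw [← prod_mul_prod]; ring
    | add h1 h2 ih1 ih2 =>
      refine isCone_congr (IsCone.add ih1 ih2) ?_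
      intro σ; ring
  | add h1 h2 ih1 ih2 =>
    refine isCone_congr (IsCone.add ih1 ih2) ?_
    intro σ; ring

lemma isCone_const {T : ℕ} {c : ℝ} (hc : 0 ≤ c) : IsCone (fun _ : Spins T => c) := by
  refine isCone_congr (IsCone.mono c hc ∅) ?_
  intro σ; simp

lemma isCone_zero {T : ℕ} : IsCone (fun _ : Spins T => 0) := isCone_const le_rfl

lemma isCone_smul {T : ℕ} {f : Spins T → ℝ} {c : ℝ} (hc : 0 ≤ c) (hf : IsCone f) :
    IsCone (fun σ => c * f σ) := (isCone_const hc).mul hf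

lemma isCone_sum {T : ℕ} {ι : Type*} (s : Finset ι) (f : ι → Spins T → ℝ)
    (hf : ∀ i ∈ s, IsCone (f i)) : IsCone (fun σ => ∑ i ∈ s, f i σ) := by
  classical
  induction s using Finset.induction with
  | empty => simpa using isCone_zero
  | @insert a s' hx ih =>
    refine isCone_congr (IsCone.add (hf a (Finset.mem_insert_self a s'))
      (ih fun i hi => hf i (Finset.mem_insert_of_mem hi))) ?_
    intro σ
    rw [Finset.sum_insert hx]

lemma neg_spin_mem {x : ℝ} (hx : x ∈ ({-1, 1} : Finset ℝ)) : -x ∈ ({-1, 1} : Finset ℝ) := by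
  rw [Finset.mem_insert, Finset.mem_singleton] at hx ⊢
  rcases hx with h | h <;> rw [h] <;> norm_num

lemma mul_spin_mem {x y : ℝ} (hx : x ∈ ({-1, 1} : Finset ℝ)) (hy : y ∈ ({-1, 1} : Finset ℝ)) :
    x * y ∈ ({-1, 1} : Finset ℝ) := by
  rw [Finset.mem_insert, Finset.mem_singleton] at hx hy ⊢
  rcases hx with h | h <;> rcases hy with h' | h' <;> rw [h, h'] <;> norm_num

/-- Flip the spin at coordinate `i₀`. -/
noncomputable def flipAt {T : ℕ} (i₀ : Fin T) (σ : Spins T) : Spins T :=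
  fun i => if i = i₀ then ⟨-(σ i : ℝ), neg_spin_mem (σ i).2⟩ else σ i

lemma flipAt_involutive {T : ℕ} (i₀ : Fin T) : Function.Involutive (flipAt i₀) := by
  intro σ
  funext i
  by_cases h : i = i₀ <;> simp [flipAt, h]

lemma sum_mono_nonneg {T : ℕ} (A : Finset (Fin T)) :
    0 ≤ ∑ σ : Spins T, ∏ i ∈ A, (σ i : ℝ) := by
  classical
  rcases A.eq_empty_or_nonempty with rfl | ⟨i₀, hi₀⟩
  · simp
  · have key : ∀ σ : Spins T, (∏ i ∈ A, ((flipAt i₀ σ) i : ℝ)) = -(∏ i ∈ A, (σ i : ℝ)) := by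
      intro σ
      rw [← Finset.mul_prod_erase _ _ hi₀, ← Finset.mul_prod_erase _ (fun i => ((σ i : ℝ))) hi₀]
      have h1 : ((flipAt i₀ σ) i₀ : ℝ) = -(σ i₀ : ℝ) := by simp [flipAt]
      have h2 : ∀ i ∈ A.erase i₀, ((flipAt i₀ σ) i : ℝ) = (σ i : ℝ) := by
        intro i hi
        have : i ≠ i₀ := Finset.ne_of_mem_erase hi
        simp [flipAt, this]
      rw [h1, Finset.prod_congr rfl h2]
      ring
    have heq : ∑ σ : Spins T, ∏ i ∈ A, (σ i : ℝ)
        = ∑ σ : Spins T, ∏ i ∈ A, ((flipAt i₀ σ) i : ℝ) :=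
      (Fintype.sum_bijective (flipAt i₀) (flipAt_involutive i₀).bijective _ _ (fun σ => rfl)).symm
    have : ∑ σ : Spins T, ∏ i ∈ A, (σ i : ℝ) = -∑ σ : Spins T, ∏ i ∈ A, (σ i : ℝ) := by
      calc ∑ σ : Spins T, ∏ i ∈ A, (σ i : ℝ)
          = ∑ σ : Spins T, ∏ i ∈ A, ((flipAt i₀ σ) i : ℝ) := heq
        _ = ∑ σ : Spins T, -(∏ i ∈ A, (σ i : ℝ)) := Finset.sum_congr rfl fun σ _ => key σ
        _ = -∑ σ : Spins T, ∏ i ∈ A, (σ i : ℝ) := by rw [Finset.sum_neg_distrib]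
    linarith

lemma sum_cone_nonneg {T : ℕ} {f : Spins T → ℝ} (hf : IsCone f) : 0 ≤ ∑ σ : Spins T, f σ := by
  induction hf with
  | mono c hc A =>
    rw [← Finset.mul_sum]
    exact mul_nonneg hc (sum_mono_nonneg A)
  | add h1 h2 ih1 ih2 =>
    rw [Finset.sum_add_distrib]
    exact add_nonneg ih1 ih2

/-- `exp` of a cone element is (pointwise) a cone element. -/
lemma isCone_exp {T : ℕ} {f : Spins T → ℝ} (hf : IsCone f) :
    ∃ F : Spins T → ℝ, IsCone F ∧ ∀ σ, Real.exp (f σ) = F σ := by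
  induction hf with
  | mono c hc A =>
    refine ⟨fun σ => Real.cosh c + Real.sinh c * ∏ i ∈ A, (σ i : ℝ), ?_, ?_⟩
    · exact IsCone.add (isCone_const (Real.cosh_pos c).le)
        (IsCone.mono _ (Real.sinh_nonneg_iff.mpr hc) A)
    · intro σ
      dsimp only
      rcases prod_spin_cases σ A with h | h <;> rw [h]
      · rw [mul_one, mul_one, Real.cosh_add_sinh]
      · rw [mul_neg_one, mul_neg_one, ← sub_eq_add_neg, Real.cosh_sub_sinh]
  | add h1 h2 ih1 ih2 =>
    obtain ⟨F1, hF1, he1⟩ := ih1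
    obtain ⟨F2, hF2, he2⟩ := ih2
    exact ⟨fun σ => F1 σ * F2 σ, hF1.mul hF2, fun σ => by rw [Real.exp_add, he1, he2]⟩

/-- First Griffiths inequality. -/
lemma gks1 {T : ℕ} {g h : Spins T → ℝ} (hg : IsCone g) (hh : IsCone h) :
    0 ≤ ∑ σ : Spins T, g σ * Real.exp (h σ) := by
  obtain ⟨F, hF, he⟩ := isCone_exp hh
  have : ∑ σ : Spins T, g σ * Real.exp (h σ) = ∑ σ : Spins T, g σ * F σ :=
    Finset.sum_congr rfl fun σ _ => by rw [he]
  rw [this]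
  exact sum_cone_nonneg (hg.mul hF)

/-- Pointwise product of two spin configurations. -/
noncomputable def mulSpin {T : ℕ} (σ t : Spins T) : Spins T :=
  fun i => ⟨(σ i : ℝ) * (t i : ℝ), mul_spin_mem (σ i).2 (t i).2⟩

lemma mulSpin_involutive {T : ℕ} (σ : Spins T) : Function.Involutive (mulSpin σ) := by
  intro t
  funext i
  apply Subtype.ext
  show (σ i : ℝ) * ((σ i : ℝ) * (t i : ℝ)) = (t i : ℝ)
  rw [← mul_assoc, spin_mul_self, one_mul]

lemma prod_mulSpin {T : ℕ} (A : Finset (Fin T)) (σ t : Spins T) :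
    (∏ i ∈ A, ((mulSpin σ t) i : ℝ)) = (∏ i ∈ A, (σ i : ℝ)) * ∏ i ∈ A, (t i : ℝ) := by
  rw [← Finset.prod_mul_distrib]
  rfl

lemma IsCone.sub_star {T : ℕ} {f : Spins T → ℝ} (t : Spins T) (hf : IsCone f) :
    IsCone (fun σ => f σ - f (mulSpin σ t)) := by
  induction hf with
  | mono c hc A =>
    have h1 : (0:ℝ) ≤ c * (1 - ∏ i ∈ A, (t i : ℝ)) := by
      apply mul_nonneg hc
      rcases prod_spin_cases t A with h | h <;> rw [h] <;> norm_num
    refine isCone_congr (IsCone.mono _ h1 A) ?_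
    intro σ
    dsimp only
    rw [prod_mulSpin]
    ring
  | add h1 h2 ih1 ih2 =>
    refine isCone_congr (IsCone.add ih1 ih2) ?_
    intro σ
    ring

lemma IsCone.add_star {T : ℕ} {f : Spins T → ℝ} (t : Spins T) (hf : IsCone f) :
    IsCone (fun σ => f σ + f (mulSpin σ t)) := by
  induction hf with
  | mono c hc A =>
    have h1 : (0:ℝ) ≤ c * (1 + ∏ i ∈ A, (t i : ℝ)) := by
      apply mul_nonneg hc
      rcases prod_spin_cases t A with h | h <;> rw [h] <;> norm_num
    refine isCone_congr (IsCone.mono _ h1 A) ?_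
    intro σ
    dsimp only
    rw [prod_mulSpin]
    ring
  | add h1 h2 ih1 ih2 =>
    refine isCone_congr (IsCone.add ih1 ih2) ?_
    intro σ
    ring

/-- Griffiths-type monotonicity: adding a ferromagnetic perturbation `Δ` to the
Hamiltonian increases the expectation of a cone observable `g`. -/
lemma exp_monotone {T : ℕ} {g h Δ : Spins T → ℝ} (hg : IsCone g) (hh : IsCone h)
    (hΔ : IsCone Δ) :
    (∑ σ : Spins T, g σ * Real.exp (h σ)) * (∑ σ : Spins T, Real.exp (h σ + Δ σ)) ≤
      (∑ σ : Spins T, g σ * Real.exp (h σ + Δ σ)) * (∑ σ : Spins T, Real.exp (h σ)) := by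
  classical
  have key : 0 ≤ ∑ σ : Spins T, ∑ τ : Spins T, (g σ - g τ) * Real.exp (h σ + h τ + Δ σ) := by
    have reidx : ∀ σ : Spins T,
        ∑ τ : Spins T, (g σ - g τ) * Real.exp (h σ + h τ + Δ σ)
          = ∑ t : Spins T, (g σ - g (mulSpin σ t)) *
              Real.exp (h σ + h (mulSpin σ t) + Δ σ) := fun σ =>
      (Fintype.sum_bijective (mulSpin σ) (mulSpin_involutive σ).bijective _ _
        (fun t => rfl)).symm
    rw [Finset.sum_congr rfl fun σ _ => reidx σ, Finset.sum_comm]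
    apply Finset.sum_nonneg
    intro t _
    have hg' : IsCone (fun σ => g σ - g (mulSpin σ t)) := hg.sub_star t
    have hh' : IsCone (fun σ => (h σ + h (mulSpin σ t)) + Δ σ) :=
      IsCone.add (hh.add_star t) hΔ
    exact gks1 hg' hh'
  have expand : ∑ σ : Spins T, ∑ τ : Spins T, (g σ - g τ) * Real.exp (h σ + h τ + Δ σ)
      = (∑ σ : Spins T, g σ * Real.exp (h σ + Δ σ)) * (∑ σ : Spins T, Real.exp (h σ))
        - (∑ σ : Spins T, g σ * Real.exp (h σ)) * (∑ σ : Spins T, Real.exp (h σ + Δ σ)) := by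
    have point : ∀ σ τ : Spins T, (g σ - g τ) * Real.exp (h σ + h τ + Δ σ)
        = g σ * Real.exp (h σ + Δ σ) * Real.exp (h τ)
          - g τ * Real.exp (h τ) * Real.exp (h σ + Δ σ) := by
      intro σ τ
      rw [show h σ + h τ + Δ σ = (h σ + Δ σ) + h τ by ring, Real.exp_add]
      ring
    simp_rw [point, Finset.sum_sub_distrib]
    rw [Finset.sum_mul_sum, Finset.sum_mul_sum]
    congr 1
    rw [Finset.sum_comm]
  linarith [key, expand]

lemma isCone_spin {T : ℕ} (a : ℕ) (ha : a < T) : IsCone (fun σ : Spins T => spinVal σ a) := by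
  refine isCone_congr (IsCone.mono 1 zero_le_one {⟨a, ha⟩}) ?_
  intro σ
  simp [spinVal, ha]

lemma spinVal_mul_self {T : ℕ} (σ : Spins T) {a : ℕ} (ha : a < T) :
    spinVal σ a * spinVal σ a = 1 := by
  rw [spinVal, dif_pos ha]
  exact spin_mul_self σ _

lemma isCone_S {T : ℕ} (s : Finset ℕ) (hs : ∀ a ∈ s, a < T) :
    IsCone (fun σ : Spins T => ∑ a ∈ s, spinVal σ a) :=
  isCone_sum s _ fun a ha => isCone_spin a (hs a ha)

lemma diag_cone {T : ℕ} (s : Finset ℕ) (hs : ∀ a ∈ s, a < T) :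
    IsCone (fun σ : Spins T => (∑ a ∈ s, spinVal σ a) ^ 2 - (s.card : ℝ)) := by
  classical
  have key : ∀ σ : Spins T, (∑ a ∈ s, ∑ b ∈ s.erase a, spinVal σ a * spinVal σ b)
      = (∑ a ∈ s, spinVal σ a) ^ 2 - (s.card : ℝ) := by
    intro σ
    have h1 : (∑ a ∈ s, spinVal σ a) ^ 2 = ∑ a ∈ s, ∑ b ∈ s, spinVal σ a * spinVal σ b := by
      rw [sq, Finset.sum_mul_sum]
    have h2 : ∀ a ∈ s, ∑ b ∈ s, spinVal σ a * spinVal σ b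
        = 1 + ∑ b ∈ s.erase a, spinVal σ a * spinVal σ b := by
      intro a ha
      rw [← Finset.add_sum_erase _ _ ha, spinVal_mul_self σ (hs a ha)]
    rw [h1, Finset.sum_congr rfl h2, Finset.sum_add_distrib]
    simp
  refine isCone_congr (isCone_sum s _ fun a ha => isCone_sum (s.erase a) _ fun b hb =>
    (isCone_spin a (hs a ha)).mul (isCone_spin b (hs b (Finset.mem_of_mem_erase hb)))) key

lemma pow_sub_cone {T : ℕ} (s : Finset ℕ) (hs : ∀ a ∈ s, a < T) (m : ℕ) :
    IsCone (fun σ : Spins T => (∑ a ∈ s, spinVal σ a) ^ (2 * m) - (s.card : ℝ) ^ m) := by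
  induction m with
  | zero => exact isCone_congr isCone_zero (fun σ => by simp)
  | succ m ih =>
    have hS := isCone_S s hs
    have step := IsCone.add ((hS.mul hS).mul ih)
      (isCone_smul (pow_nonneg (Nat.cast_nonneg s.card) m) (diag_cone s hs))
    refine isCone_congr step ?_
    intro σ
    ring

lemma key_term_cone {T : ℕ} (k : ℕ) (hk : 1 ≤ k) (c : ℝ) (hc : 0 < c)
    (i j : ℕ) (hij : i < j) (hjT : j ≤ T) :
    IsCone (fun σ : Spins T =>
      (∑ a ∈ Finset.Ico i j, spinVal σ a) ^ (2 * k) / ((j - i : ℕ) : ℝ) ^ ((k : ℝ) + c)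
        - (∑ a ∈ Finset.Ico i j, spinVal σ a) ^ 2 / ((j - i : ℕ) : ℝ) ^ ((1 : ℝ) + c)) := by
  have hn : (0 : ℝ) < ((j - i : ℕ) : ℝ) := by
    have : 0 < j - i := Nat.sub_pos_of_lt hij
    exact_mod_cast this
  set n : ℝ := ((j - i : ℕ) : ℝ) with hn_def
  have hcard : ((Finset.Ico i j).card : ℝ) = n := by rw [Nat.card_Ico]
  have hs : ∀ a ∈ Finset.Ico i j, a < T := fun a ha =>
    lt_of_lt_of_le (Finset.mem_Ico.mp ha).2 hjT
  have hN : n ^ ((k : ℝ) + c) = n ^ (k - 1 : ℕ) * n ^ ((1 : ℝ) + c) := by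
    rw [← Real.rpow_natCast n (k - 1), ← Real.rpow_add hn]
    congr 1
    push_cast [Nat.cast_sub hk]
    ring
  have hS := isCone_S (T := T) (Finset.Ico i j) hs
  have step := isCone_smul (le_of_lt (by positivity :
      (0:ℝ) < 1 / n ^ ((k : ℝ) + c)))
    ((hS.mul hS).mul (pow_sub_cone (Finset.Ico i j) hs (k - 1)))
  refine isCone_congr step ?_
  intro σ
  rw [hcard]
  set S : ℝ := ∑ a ∈ Finset.Ico i j, spinVal σ a
  have h2k : 2 * k = 2 * (k - 1) + 2 := by omega
  have hpos1 : n ^ ((k : ℝ) + c) ≠ 0 := by positivity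
  have hpos2 : n ^ ((1 : ℝ) + c) ≠ 0 := by positivity
  rw [h2k]
  field_simp
  rw [hN]
  ring

lemma energy_two_eq {T : ℕ} (c : ℝ) (σ : Spins T) :
    lrEnergy T 2 (1 + c) σ = ∑ j ∈ Finset.range (T + 1), ∑ i ∈ Finset.range j,
      (∑ a ∈ Finset.Ico i j, spinVal σ a) ^ 2 / ((j - i : ℕ) : ℝ) ^ ((1 : ℝ) + c) := by
  unfold lrEnergy
  refine Finset.sum_congr rfl fun j _ => Finset.sum_congr rfl fun i _ => ?_
  congr 1
  rw [show (2 : ℝ) = ((2 : ℕ) : ℝ) by norm_num, Real.rpow_natCast, sq_abs]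

lemma energy_gamma_eq {T : ℕ} (k : ℕ) (γ ξ : ℝ) (hγ : γ = 2 * k) (σ : Spins T) :
    lrEnergy T γ ξ σ = ∑ j ∈ Finset.range (T + 1), ∑ i ∈ Finset.range j,
      (∑ a ∈ Finset.Ico i j, spinVal σ a) ^ (2 * k) / ((j - i : ℕ) : ℝ) ^ ξ := by
  unfold lrEnergy
  refine Finset.sum_congr rfl fun j _ => Finset.sum_congr rfl fun i _ => ?_
  congr 1
  rw [hγ, show (2 * (k : ℝ)) = ((2 * k : ℕ) : ℝ) by push_cast; ring, Real.rpow_natCast,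
    pow_mul, sq_abs, ← pow_mul]

instance spins_nonempty {T : ℕ} : Nonempty (Spins T) :=
  ⟨fun _ => ⟨1, by simp⟩⟩


/-- **Lemma (`γ = 2` suffices).** Let `γ = 2k` with `k ≥ 1`, `c > 0` and `ξ = γ/2 + c`.
Then for the one-dimensional simple random walk,
`E^{P̂_{α,T,γ,ξ}}[x_T²] ≥ E^{P̂_{α,T,2,1+c}}[x_T²]`. -/
theorem gamma_two_suffices
    (k : ℕ) (hk : 1 ≤ k) (γ : ℝ) (hγ : γ = 2 * k)
    (c : ℝ) (hc : 0 < c) (ξ : ℝ) (hξ : ξ = γ / 2 + c)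
    (α : ℝ) (hα : 0 < α) (T : ℕ) :
    lrExp T α 2 (1 + c) (fun σ => (∑ k ∈ Finset.range T, spinVal σ k) ^ 2) ≤
      lrExp T α γ ξ (fun σ => (∑ k ∈ Finset.range T, spinVal σ k) ^ 2) := by
  classical
  have hξk : ξ = (k : ℝ) + c := by rw [hξ, hγ]; ring
  -- the three cone functions
  have hSr : IsCone (fun σ : Spins T => ∑ a ∈ Finset.range T, spinVal σ a) :=
    isCone_S _ fun a ha => Finset.mem_range.mp ha
  have hg : IsCone (fun σ : Spins T => (∑ a ∈ Finset.range T, spinVal σ a) ^ 2) :=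
    isCone_congr (hSr.mul hSr) fun σ => by rw [← sq]
  have hh : IsCone (fun σ : Spins T => α * lrEnergy T 2 (1 + c) σ) := by
    refine isCone_congr (isCone_smul hα.le (isCone_sum (Finset.range (T + 1))
      (fun j σ => ∑ i ∈ Finset.range j,
        (∑ a ∈ Finset.Ico i j, spinVal σ a) ^ 2 / ((j - i : ℕ) : ℝ) ^ ((1 : ℝ) + c))
      fun j hj => isCone_sum (Finset.range j) _ fun i hi => ?_)) fun σ => by
        rw [← energy_two_eq c σ]
    · -- each pair term is a cone element
      have hn : (0 : ℝ) < ((j - i : ℕ) : ℝ) := by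
        have : 0 < j - i := Nat.sub_pos_of_lt (Finset.mem_range.mp hi)
        exact_mod_cast this
      have hs : ∀ a ∈ Finset.Ico i j, a < T := fun a ha =>
        lt_of_lt_of_le (Finset.mem_Ico.mp ha).2 (Nat.lt_succ_iff.mp (Finset.mem_range.mp hj))
      have hS := isCone_S (T := T) (Finset.Ico i j) hs
      refine isCone_congr (isCone_smul (le_of_lt (by positivity :
        (0:ℝ) < 1 / ((j - i : ℕ) : ℝ) ^ ((1 : ℝ) + c))) (hS.mul hS)) fun σ => ?_
      rw [sq]
      ring
  have hD : IsCone (fun σ : Spins T =>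
      α * lrEnergy T γ ξ σ - α * lrEnergy T 2 (1 + c) σ) := by
    refine isCone_congr (isCone_smul hα.le (isCone_sum (Finset.range (T + 1))
      (fun j σ => ∑ i ∈ Finset.range j,
        ((∑ a ∈ Finset.Ico i j, spinVal σ a) ^ (2 * k) / ((j - i : ℕ) : ℝ) ^ ((k : ℝ) + c)
          - (∑ a ∈ Finset.Ico i j, spinVal σ a) ^ 2 / ((j - i : ℕ) : ℝ) ^ ((1 : ℝ) + c)))
      fun j hj => isCone_sum (Finset.range j)
        (fun i σ =>
          (∑ a ∈ Finset.Ico i j, spinVal σ a) ^ (2 * k) / ((j - i : ℕ) : ℝ) ^ ((k : ℝ) + c)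
          - (∑ a ∈ Finset.Ico i j, spinVal σ a) ^ 2 / ((j - i : ℕ) : ℝ) ^ ((1 : ℝ) + c))
        fun i hi => key_term_cone k hk c hc i j (Finset.mem_range.mp hi)
          (Nat.lt_succ_iff.mp (Finset.mem_range.mp hj)))) fun σ => ?_
    rw [energy_gamma_eq k γ ξ hγ σ, energy_two_eq c σ, ← hξk]
    rw [← mul_sub, ← Finset.sum_sub_distrib]
    congr 1
    refine Finset.sum_congr rfl fun j _ => ?_
    rw [← Finset.sum_sub_distrib]
  -- positivity of partition functions
  have hZ2 : 0 < ∑ σ : Spins T, Real.exp (α * lrEnergy T 2 (1 + c) σ) :=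
    Finset.sum_pos (fun σ _ => Real.exp_pos _) Finset.univ_nonempty
  have hZγ : 0 < ∑ σ : Spins T, Real.exp (α * lrEnergy T γ ξ σ) :=
    Finset.sum_pos (fun σ _ => Real.exp_pos _) Finset.univ_nonempty
  unfold lrExp
  rw [div_le_div_iff₀ hZ2 hZγ]
  have key := exp_monotone hg hh hD
  simp_rw [show ∀ σ : Spins T, α * lrEnergy T 2 (1 + c) σ +
      (α * lrEnergy T γ ξ σ - α * lrEnergy T 2 (1 + c) σ) = α * lrEnergy T γ ξ σ from
    fun σ => by ring] at key
  exact key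
end

section
/- Let K be a nonempty compact convex subset of a locally convex topological vector space, and let L₁, L₂ : K → ℝ be continuous affine maps with L₂(x) > 0 for all x ∈ K. Define F(x) := L₁(x)/L₂(x). Then F attains its minimum over K at an extreme point of K. -/
/-!
With `m` the minimum of `L₁ / L₂` on `K` (attained by compactness), the function
`G = L₁ - m * L₂` is affine and nonnegative on `K`, and vanishes exactly where the ratio
equals `m`. The zero set of a nonnegative affine function is an extreme subset, here also
compact and nonempty, so by Krein–Milman it has an extreme point, which is then an extreme
point of `K`.
-/

open Set

def AffineOn (𝕜 : Type*) {E : Type*} [Ring 𝕜] [PartialOrder 𝕜] [AddCommGroup E] [Module 𝕜 E]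
    (K : Set E) (L : E → 𝕜) : Prop :=
  ∀ x ∈ K, ∀ y ∈ K, ∀ t ∈ Icc (0 : 𝕜) 1, L (t • x + (1 - t) • y) = t * L x + (1 - t) * L y

namespace AffineOn

variable {𝕜 E : Type*} [CommRing 𝕜] [LinearOrder 𝕜] [AddCommGroup E] [Module 𝕜 E] {K : Set E}
  {L₁ L₂ G : E → 𝕜}

theorem sub_const_mul (h₁ : AffineOn 𝕜 K L₁) (h₂ : AffineOn 𝕜 K L₂) (c : 𝕜) :
    AffineOn 𝕜 K fun x => L₁ x - c * L₂ x := by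
  intro x hx y hy t ht
  simp only [h₁ x hx y hy t ht, h₂ x hx y hy t ht]
  ring

theorem isExtreme_inter_preimage_zero [IsStrictOrderedRing 𝕜] (hG : AffineOn 𝕜 K G)
    (hG_nonneg : ∀ x ∈ K, 0 ≤ G x) :
    IsExtreme 𝕜 K (K ∩ G ⁻¹' {0}) := by
  refine ⟨inter_subset_left, ?_⟩
  rintro y hy z hz x ⟨-, hx0⟩ ⟨a, b, ha, hb, hab, rfl⟩
  obtain rfl : b = 1 - a := by linarith
  have hcomb : a * G y + (1 - a) * G z = 0 := by
    rw [← hG y hy z hz a ⟨ha.le, by linarith⟩]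
    exact hx0
  have hy0 := mul_nonneg ha.le (hG_nonneg y hy)
  have hz0 := mul_nonneg hb.le (hG_nonneg z hz)
  exact ⟨hy, (mul_eq_zero.1 (by linarith : a * G y = 0)).resolve_left ha.ne'⟩

end AffineOn

theorem ratio_min_at_extreme_point_general
    {E : Type*} [AddCommGroup E] [Module ℝ E] [TopologicalSpace E]
    [IsTopologicalAddGroup E] [ContinuousSMul ℝ E] [LocallyConvexSpace ℝ E] [T2Space E]
    (K : Set E) (hKne : K.Nonempty) (hKcp : IsCompact K)
    (L₁ L₂ : E → ℝ)
    (hL₁aff : ∀ x ∈ K, ∀ y ∈ K, ∀ t ∈ Set.Icc (0 : ℝ) 1,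
      L₁ (t • x + (1 - t) • y) = t * L₁ x + (1 - t) * L₁ y)
    (hL₂aff : ∀ x ∈ K, ∀ y ∈ K, ∀ t ∈ Set.Icc (0 : ℝ) 1,
      L₂ (t • x + (1 - t) • y) = t * L₂ x + (1 - t) * L₂ y)
    (hL₁cont : ContinuousOn L₁ K) (hL₂cont : ContinuousOn L₂ K)
    (hL₂pos : ∀ x ∈ K, 0 < L₂ x) :
    ∃ x ∈ Set.extremePoints ℝ K, ∀ y ∈ K, L₁ x / L₂ x ≤ L₁ y / L₂ y := by
  obtain ⟨x₀, hx₀K, hx₀min⟩ :=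
    hKcp.exists_isMinOn hKne (hL₁cont.div hL₂cont fun x hx => (hL₂pos x hx).ne')
  set m := L₁ x₀ / L₂ x₀
  let G : E → ℝ := fun x => L₁ x - m * L₂ x
  have hG_nonneg : ∀ y ∈ K, 0 ≤ G y := fun y hy =>
    sub_nonneg.2 ((le_div_iff₀ (hL₂pos y hy)).1 (hx₀min hy))
  have hM_extreme : IsExtreme ℝ K (K ∩ G ⁻¹' {0}) :=
    (AffineOn.sub_const_mul hL₁aff hL₂aff m).isExtreme_inter_preimage_zero hG_nonneg
  have hM_compact : IsCompact (K ∩ G ⁻¹' {0}) := by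
    have hG_cont : ContinuousOn G K := hL₁cont.sub (continuousOn_const.mul hL₂cont)
    exact hKcp.of_isClosed_subset
      (hG_cont.preimage_isClosed_of_isClosed hKcp.isClosed isClosed_singleton) inter_subset_left
  have hx₀M : x₀ ∈ K ∩ G ⁻¹' {0} :=
    ⟨hx₀K, sub_eq_zero.2 (div_mul_cancel₀ _ (hL₂pos x₀ hx₀K).ne').symm⟩
  obtain ⟨x, hx⟩ := hM_compact.extremePoints_nonempty ⟨x₀, hx₀M⟩
  obtain ⟨hxK, hx0⟩ := hx.1
  have hFx : L₁ x / L₂ x = m := (div_eq_iff (hL₂pos x hxK).ne').2 (sub_eq_zero.1 hx0)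
  exact ⟨x, hM_extreme.extremePoints_subset_extremePoints hx, fun y hy => hFx ▸ hx₀min hy⟩

/-- **Lemma.** Let `K` be a nonempty compact convex subset of a locally convex topological
vector space, and `L₁, L₂ : K → ℝ` continuous affine maps with `L₂ > 0` on `K`. Then
`F = L₁/L₂` attains its minimum over `K` at an extreme point of `K`. -/
theorem ratio_min_at_extreme_point
    {E : Type*} [AddCommGroup E] [Module ℝ E] [TopologicalSpace E]
    [IsTopologicalAddGroup E] [ContinuousSMul ℝ E] [LocallyConvexSpace ℝ E] [T2Space E]
    (K : Set E) (hKne : K.Nonempty) (hKcp : IsCompact K) (hKcv : Convex ℝ K)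
    (L₁ L₂ : E → ℝ)
    (hL₁aff : ∀ x ∈ K, ∀ y ∈ K, ∀ t ∈ Set.Icc (0 : ℝ) 1,
      L₁ (t • x + (1 - t) • y) = t * L₁ x + (1 - t) * L₁ y)
    (hL₂aff : ∀ x ∈ K, ∀ y ∈ K, ∀ t ∈ Set.Icc (0 : ℝ) 1,
      L₂ (t • x + (1 - t) • y) = t * L₂ x + (1 - t) * L₂ y)
    (hL₁cont : ContinuousOn L₁ K) (hL₂cont : ContinuousOn L₂ K)
    (hL₂pos : ∀ x ∈ K, 0 < L₂ x) :
    ∃ x ∈ Set.extremePoints ℝ K, ∀ y ∈ K, L₁ x / L₂ x ≤ L₁ y / L₂ y :=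
  ratio_min_at_extreme_point_general K hKne hKcp L₁ L₂ hL₁aff hL₂aff hL₁cont hL₂cont hL₂pos
end

section
/- Let V > 0 and β > 0 with βV ≤ 2, and define k(x) := x·sinh(βx) − V·tanh(βV)·cosh(βx) and φ(t) := k(√t) for t > 0. Then k''(x) > 0 for all x > 0 and φ is strictly convex on (0,∞); moreover k(V) = 0. -/
/-!
Write `c = V tanh (βV)`, so that `cβ = βV tanh (βV) ≤ βV ≤ 2`. Then
`k'' x = β (2 - cβ) cosh (βx) + β² x sinh (βx) > 0`. For `φ = k ∘ √`,
`φ' t = (β / 2) h (β √t)` with `h u = (1 - cβ) sinh u / u + cosh u`, and `u² h' u` equals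
`(1 - cβ) (u cosh u - sinh u) + u² sinh u`, which is positive because `1 - cβ ≥ -1` and
`u cosh u < (1 + u²) sinh u`. Hence `φ'` is strictly increasing on `(0, ∞)`.
-/

open Real Set

lemma pos_of_map_zero_of_hasDerivAt_pos {f f' : ℝ → ℝ} (hf : ∀ x, HasDerivAt f (f' x) x)
    (h₀ : f 0 = 0) (hf' : ∀ x > 0, 0 < f' x) {u : ℝ} (hu : 0 < u) : 0 < f u := by
  have hmono := strictMonoOn_of_hasDerivWithinAt_pos (convex_Ici 0)
    (fun x _ ↦ (hf x).continuousAt.continuousWithinAt) (fun x _ ↦ (hf x).hasDerivWithinAt)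
    (by simpa using hf')
  simpa [h₀] using hmono self_mem_Ici hu.le hu

namespace Real

lemma sinh_lt_mul_cosh {u : ℝ} (hu : 0 < u) : sinh u < u * cosh u := by
  have hf (x : ℝ) : HasDerivAt (fun x ↦ x * cosh x - sinh x) (x * sinh x) x := by
    refine (((hasDerivAt_id' x).mul (hasDerivAt_cosh x)).sub (hasDerivAt_sinh x)).congr_deriv ?_
    ring
  have := pos_of_map_zero_of_hasDerivAt_pos hf (by simp)
    (fun x hx ↦ mul_pos hx (sinh_pos_iff.2 hx)) hu
  linarith

lemma mul_cosh_lt_one_add_sq_mul_sinh {u : ℝ} (hu : 0 < u) :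
    u * cosh u < (1 + u ^ 2) * sinh u := by
  have hf (x : ℝ) : HasDerivAt (fun x ↦ (1 + x ^ 2) * sinh x - x * cosh x)
      (x * sinh x + x ^ 2 * cosh x) x := by
    refine ((((hasDerivAt_pow 2 x).const_add 1).mul (hasDerivAt_sinh x)).sub
      ((hasDerivAt_id' x).mul (hasDerivAt_cosh x))).congr_deriv ?_
    push_cast; ring
  have := pos_of_map_zero_of_hasDerivAt_pos hf (by simp)
    (fun x hx ↦ by have := sinh_pos_iff.2 hx; positivity) hu
  linarith

end Real

lemma strictMonoOn_mul_sinh_div_add_cosh {a : ℝ} (ha : -1 ≤ a) :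
    StrictMonoOn (fun u ↦ a * (sinh u / u) + cosh u) (Ioi 0) := by
  have hderiv {u : ℝ} (hu : 0 < u) : HasDerivAt (fun u ↦ a * (sinh u / u) + cosh u)
      ((a * (u * cosh u - sinh u) + u ^ 2 * sinh u) / u ^ 2) u :=
    ((((hasDerivAt_sinh u).div (hasDerivAt_id' u) hu.ne').const_mul a).add
      (hasDerivAt_cosh u)).congr_deriv (by field_simp)
  refine strictMonoOn_of_hasDerivWithinAt_pos (convex_Ioi 0)
    (fun u hu ↦ (hderiv hu).continuousAt.continuousWithinAt)
    (fun u hu ↦ (hderiv (interior_subset hu)).hasDerivWithinAt) fun u hu ↦ ?_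
  rw [interior_Ioi, mem_Ioi] at hu
  have hG := sub_pos.2 (sinh_lt_mul_cosh hu)
  have hF := mul_cosh_lt_one_add_sq_mul_sinh hu
  have : 0 < a * (u * cosh u - sinh u) + u ^ 2 * sinh u := by nlinarith
  positivity

section MulSinhSubMulCosh

variable (β c : ℝ)

lemma hasDerivAt_mul_sinh_sub_mul_cosh (y : ℝ) :
    HasDerivAt (fun y ↦ y * sinh (β * y) - c * cosh (β * y))
      ((1 - c * β) * sinh (β * y) + β * y * cosh (β * y)) y := by
  have hβy : HasDerivAt (β * ·) β y := by simpa using (hasDerivAt_id y).const_mul β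
  refine (((hasDerivAt_id' y).mul hβy.sinh).sub (hβy.cosh.const_mul c)).congr_deriv ?_
  ring

lemma deriv_deriv_mul_sinh_sub_mul_cosh (x : ℝ) :
    deriv (deriv fun y ↦ y * sinh (β * y) - c * cosh (β * y)) x =
      β * (2 - c * β) * cosh (β * x) + β ^ 2 * x * sinh (β * x) := by
  have hβx : HasDerivAt (β * ·) β x := by simpa using (hasDerivAt_id x).const_mul β
  rw [funext fun y ↦ (hasDerivAt_mul_sinh_sub_mul_cosh β c y).deriv]
  refine (((hβx.sinh.const_mul (1 - c * β)).add
    (((hasDerivAt_id' x).const_mul β).mul hβx.cosh)).congr_deriv ?_).deriv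
  ring

variable {β c}

lemma deriv_deriv_mul_sinh_sub_mul_cosh_pos (hβ : 0 < β) (hcβ : c * β ≤ 2) {x : ℝ}
    (hx : 0 < x) : 0 < deriv (deriv fun y ↦ y * sinh (β * y) - c * cosh (β * y)) x := by
  rw [deriv_deriv_mul_sinh_sub_mul_cosh]
  have := sinh_pos_iff.2 (mul_pos hβ hx)
  have : 0 ≤ 2 - c * β := by linarith
  positivity

lemma strictConvexOn_mul_sinh_sub_mul_cosh_comp_sqrt (hβ : 0 < β) (hcβ : c * β ≤ 2) :
    StrictConvexOn ℝ (Ioi 0) fun t ↦ √t * sinh (β * √t) - c * cosh (β * √t) := by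
  have hderiv : ∀ t ∈ Ioi (0 : ℝ),
      deriv (fun t ↦ √t * sinh (β * √t) - c * cosh (β * √t)) t =
        β / 2 * ((1 - c * β) * (sinh (β * √t) / (β * √t)) + cosh (β * √t)) := by
    intro t ht
    have hs : 0 < √t := sqrt_pos.2 ht
    refine ((hasDerivAt_mul_sinh_sub_mul_cosh β c √t).comp t
      (hasDerivAt_sqrt (ne_of_gt ht))).deriv.trans ?_
    field_simp
  refine StrictMonoOn.strictConvexOn_of_deriv (convex_Ioi 0) (by fun_prop) ?_
  rw [interior_Ioi]
  refine StrictMonoOn.congr ?_ fun t ht ↦ (hderiv t ht).symm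
  have hmono := (strictMonoOn_mul_sinh_div_add_cosh (a := 1 - c * β) (by linarith)).comp
    (f := fun t ↦ β * √t) (s := Ioi 0)
    (fun s hs t _ hst ↦ mul_lt_mul_of_pos_left (sqrt_lt_sqrt (le_of_lt hs) hst) hβ)
    fun t ht ↦ mul_pos hβ (sqrt_pos.2 ht)
  exact fun s hs t ht hst ↦ mul_lt_mul_of_pos_left (hmono hs ht hst) (half_pos hβ)

end MulSinhSubMulCosh

/-- **Proposition (convexity of the comparison function).** Let `V > 0`, `β > 0` with
`βV ≤ 2`, and set `k(x) = x sinh(βx) − V tanh(βV) cosh(βx)` and `φ(t) = k(√t)`.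
Then `k'' > 0 on (0,∞)`, `φ` is strictly convex on `(0,∞)`, and `k(V) = 0`. -/
theorem comparison_function_convex
    (V β : ℝ) (hV : 0 < V) (hβ : 0 < β) (hβV : β * V ≤ 2) :
    (∀ x > (0 : ℝ),
      0 < deriv (deriv fun y : ℝ =>
        y * Real.sinh (β * y) - V * Real.tanh (β * V) * Real.cosh (β * y)) x) ∧
    StrictConvexOn ℝ (Set.Ioi (0 : ℝ)) (fun t : ℝ =>
      Real.sqrt t * Real.sinh (β * Real.sqrt t) -
        V * Real.tanh (β * V) * Real.cosh (β * Real.sqrt t)) ∧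
    V * Real.sinh (β * V) - V * Real.tanh (β * V) * Real.cosh (β * V) = 0 := by
  have hcβ : V * tanh (β * V) * β ≤ 2 := calc
    V * tanh (β * V) * β = β * V * tanh (β * V) := by ring
    _ ≤ β * V * 1 := by gcongr; exact (tanh_lt_one _).le
    _ ≤ 2 := by linarith
  refine ⟨fun x hx ↦ deriv_deriv_mul_sinh_sub_mul_cosh_pos hβ hcβ hx,
    strictConvexOn_mul_sinh_sub_mul_cosh_comp_sqrt hβ hcβ, ?_⟩
  rw [tanh_eq_sinh_div_cosh, mul_assoc, div_mul_cancel₀ _ (cosh_pos _).ne', sub_self]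
end
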